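/- arXiv:1905.09159 — 7 statements merged into one kernel-verified Lean document; each statement's English description precedes it below -/
import Mathlib

section
/- Let α ∈ (0,1), let g : ℝ^d → ℝ^d satisfy a global Lipschitz condition with constant L > 0, let T > 0, and let f : [0,T] → ℝ^d be continuous. Then there exists a unique continuous function x : [0,T] → ℝ^d satisfying the singular Volterra integral equation x(t) = f(t) + (1/Γ(α)) ∫₀ᵗ (t−s)^{α−1} g(x(s)) ds for all t ∈ [0,T]. -/
open Real MeasureTheory Set
open scoped NNReal

/-!
Bielecki's weighted norm. Since `∫₀ᵗ (t - s)^(α-1) e^(cs) ds ≤ e^(ct) Γ(α) / c^α`, the Volterra map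
`V x = f + (1/Γ(α)) ∫₀ᵗ (t - s)^(α-1) g(x(s)) ds` on `C([0,T], E)` satisfies
`sup_t e^(-ct) ‖V x t - V y t‖ ≤ (L / c^α) sup_t e^(-ct) ‖x t - y t‖`. Taking `c^α = L + 1` makes
it a contraction for the weighted sup-norm, and Banach's fixed point theorem gives existence and
uniqueness. That `V x` is again continuous follows by dominated convergence after substituting
`u = t - s`, the singular kernel `u^(α-1)` being integrable near `0`.
-/

/-- Conjugating `V` by multiplication with the weight turns it into a contraction for the
sup-distance. -/
theorem ContinuousMap.existsUnique_fixedPoint_of_weighted_contraction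
    {X E : Type*} [TopologicalSpace X] [CompactSpace X] [NormedAddCommGroup E]
    [NormedSpace ℝ E] [CompleteSpace E] {w : X → ℝ} (hw : Continuous w) (hw₀ : ∀ p, 0 < w p)
    {K : ℝ≥0} (hK : K < 1) (V : C(X, E) → C(X, E))
    (hV : ∀ x y D, (∀ q, w q * ‖x q - y q‖ ≤ D) → ∀ p, w p * ‖V x p - V y p‖ ≤ K * D) :
    ∃! x, V x = x := by
  have hw' : Continuous fun p => (w p)⁻¹ := hw.inv₀ fun p => (hw₀ p).ne'
  let e : C(X, E) ≃ C(X, E) :=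
    { toFun := fun x => ⟨fun p => w p • x p, hw.smul x.continuous⟩
      invFun := fun x => ⟨fun p => (w p)⁻¹ • x p, hw'.smul x.continuous⟩
      left_inv := fun x => by ext p; simp [smul_smul, (hw₀ p).ne']
      right_inv := fun x => by ext p; simp [smul_smul, (hw₀ p).ne'] }
  have hΦ : ContractingWith K (e ∘ V ∘ e.symm) := by
    refine ⟨hK, LipschitzWith.of_dist_le_mul fun x y => ?_⟩
    refine (ContinuousMap.dist_le (by positivity)).2 fun p => ?_
    have hD : ∀ q, w q * ‖e.symm x q - e.symm y q‖ ≤ dist x y := fun q => by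
      simpa [e, ← smul_sub, norm_smul, abs_of_pos (hw₀ q), ← dist_eq_norm,
        mul_inv_cancel_left₀ (hw₀ q).ne'] using ContinuousMap.dist_apply_le_dist q
    simpa [e, dist_eq_norm, ← smul_sub, norm_smul, abs_of_pos (hw₀ p)] using
      hV _ _ _ hD p
  refine ⟨e.symm (ContractingWith.fixedPoint _ hΦ), ?_, fun y hy => ?_⟩
  · simpa using congrArg e.symm hΦ.fixedPoint_isFixedPt
  · rw [Equiv.eq_symm_apply]
    exact hΦ.fixedPoint_unique (by simp [Function.IsFixedPt, hy])

variable {E : Type*} [NormedAddCommGroup E] [NormedSpace ℝ E]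

noncomputable def riemannLiouville (α : ℝ) (h : ℝ → E) (t : ℝ) : E :=
  (1 / Gamma α) • ∫ s in (0:ℝ)..t, (t - s) ^ (α - 1) • h s

theorem intervalIntegrable_rpow_sub_smul {α t : ℝ} (hα : 0 < α) {h : ℝ → E}
    (hh : ContinuousOn h (uIcc 0 t)) :
    IntervalIntegrable (fun s => (t - s) ^ (α - 1) • h s) volume 0 t := by
  have hk : IntervalIntegrable (fun s : ℝ => (t - s) ^ (α - 1)) volume 0 t := by
    simpa using
      ((intervalIntegral.intervalIntegrable_rpow' (a := 0) (b := t) (r := α - 1)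
        (by linarith)).comp_sub_left t).symm
  exact hk.smul_continuousOn hh

theorem riemannLiouville_sub {α t : ℝ} (hα : 0 < α) {h₁ h₂ : ℝ → E}
    (hh₁ : ContinuousOn h₁ (uIcc 0 t)) (hh₂ : ContinuousOn h₂ (uIcc 0 t)) :
    riemannLiouville α (fun s => h₁ s - h₂ s) t =
      riemannLiouville α h₁ t - riemannLiouville α h₂ t := by
  simp only [riemannLiouville, ← smul_sub,
    ← intervalIntegral.integral_sub (intervalIntegrable_rpow_sub_smul hα hh₁)
      (intervalIntegrable_rpow_sub_smul hα hh₂)]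

theorem riemannLiouville_congr {α t : ℝ} (ht : 0 ≤ t) {h₁ h₂ : ℝ → E}
    (heq : EqOn h₁ h₂ (Icc 0 t)) :
    riemannLiouville α h₁ t = riemannLiouville α h₂ t := by
  unfold riemannLiouville
  congr 1
  refine intervalIntegral.integral_congr fun s hs => ?_
  rw [uIcc_of_le ht] at hs
  simp only [heq hs]

theorem integral_rpow_mul_exp_neg_le {α c t : ℝ} (hα : 0 < α) (hc : 0 < c) (ht : 0 ≤ t) :
    ∫ u in (0:ℝ)..t, u ^ (α - 1) * exp (-(c * u)) ≤ Gamma α / c ^ α := by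
  have hint : IntegrableOn (fun u : ℝ => u ^ (α - 1) * exp (-(c * u))) (Ioi 0) := by
    simpa using integrableOn_rpow_mul_exp_neg_mul_rpow (s := α - 1) (p := 1) (by linarith)
      zero_lt_one hc
  calc ∫ u in (0:ℝ)..t, u ^ (α - 1) * exp (-(c * u))
      ≤ ∫ u in Ioi 0, u ^ (α - 1) * exp (-(c * u)) := by
        rw [intervalIntegral.integral_of_le ht]
        refine setIntegral_mono_set hint ?_ Ioc_subset_Ioi_self.eventuallyLE
        filter_upwards [self_mem_ae_restrict measurableSet_Ioi] with u hu
        exact mul_nonneg (rpow_nonneg (le_of_lt hu) _) (exp_pos _).le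
    _ = Gamma α / c ^ α := by
        rw [integral_rpow_mul_exp_neg_mul_Ioi hα hc, one_div, inv_rpow hc.le, div_eq_inv_mul]

theorem integral_rpow_sub_mul_exp_le {α c t : ℝ} (hα : 0 < α) (hc : 0 < c) (ht : 0 ≤ t) :
    ∫ s in (0:ℝ)..t, (t - s) ^ (α - 1) * exp (c * s) ≤ exp (c * t) * (Gamma α / c ^ α) := by
  calc ∫ s in (0:ℝ)..t, (t - s) ^ (α - 1) * exp (c * s)
      = exp (c * t) * ∫ u in (0:ℝ)..t, u ^ (α - 1) * exp (-(c * u)) := by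
        rw [← intervalIntegral.integral_const_mul]
        have := intervalIntegral.integral_comp_sub_left (a := 0) (b := t)
          (fun u => exp (c * t) * (u ^ (α - 1) * exp (-(c * u)))) t
        simp only [sub_self, sub_zero] at this
        rw [← this]
        congr 1 with s
        rw [mul_sub, neg_sub, exp_sub]
        field_simp
    _ ≤ exp (c * t) * (Gamma α / c ^ α) :=
        mul_le_mul_of_nonneg_left (integral_rpow_mul_exp_neg_le hα hc ht) (exp_pos _).le

theorem norm_riemannLiouville_le {α c t C : ℝ} (hα : 0 < α) (hc : 0 < c) (ht : 0 ≤ t)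
    {h : ℝ → E} (hh : ∀ s ∈ Icc 0 t, ‖h s‖ ≤ C * exp (c * s)) :
    ‖riemannLiouville α h t‖ ≤ C * exp (c * t) / c ^ α := by
  have hC : 0 ≤ C := nonneg_of_mul_nonneg_left ((norm_nonneg _).trans
    (hh 0 ⟨le_rfl, ht⟩)) (exp_pos _)
  have hΓ : 0 < Gamma α := Gamma_pos_of_pos hα
  have hbound : IntervalIntegrable (fun s => (t - s) ^ (α - 1) * (C * exp (c * s))) volume 0 t :=
    intervalIntegrable_rpow_sub_smul hα (by fun_prop)
  have hint : ‖∫ s in (0:ℝ)..t, (t - s) ^ (α - 1) • h s‖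
      ≤ C * (exp (c * t) * (Gamma α / c ^ α)) := calc
    _ ≤ ∫ s in (0:ℝ)..t, (t - s) ^ (α - 1) * (C * exp (c * s)) := by
        refine intervalIntegral.norm_integral_le_of_norm_le ht
          (Filter.Eventually.of_forall fun s hs => ?_) hbound
        have hk : 0 ≤ (t - s) ^ (α - 1) := rpow_nonneg (sub_nonneg.2 hs.2) _
        rw [norm_smul, norm_of_nonneg hk]
        exact mul_le_mul_of_nonneg_left (hh s (Ioc_subset_Icc_self hs)) hk
    _ = C * ∫ s in (0:ℝ)..t, (t - s) ^ (α - 1) * exp (c * s) := by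
        rw [← intervalIntegral.integral_const_mul]
        congr 1 with s
        ring
    _ ≤ C * (exp (c * t) * (Gamma α / c ^ α)) :=
        mul_le_mul_of_nonneg_left (integral_rpow_sub_mul_exp_le hα hc ht) hC
  rw [riemannLiouville, norm_smul, norm_of_nonneg (by positivity)]
  calc 1 / Gamma α * ‖∫ s in (0:ℝ)..t, (t - s) ^ (α - 1) • h s‖
      ≤ 1 / Gamma α * (C * (exp (c * t) * (Gamma α / c ^ α))) := by gcongr
    _ = C * exp (c * t) / c ^ α := by field_simp

theorem intervalIntegral_rpow_sub_smul_eq_setIntegral {α t T : ℝ} (ht : t ∈ Icc 0 T)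
    (h : ℝ → E) :
    ∫ s in (0:ℝ)..t, (t - s) ^ (α - 1) • h s =
      ∫ u in Ioc 0 T, (Iic t).indicator (fun u => u ^ (α - 1) • h (t - u)) u := by
  rw [setIntegral_indicator measurableSet_Iic, Ioc_inter_Iic, min_eq_right ht.2,
    ← intervalIntegral.integral_of_le ht.1]
  simpa using intervalIntegral.integral_comp_sub_left (a := 0) (b := t)
    (fun u => u ^ (α - 1) • h (t - u)) t

theorem continuousOn_riemannLiouville {α : ℝ} (hα : 0 < α) {h : ℝ → E} (hh : Continuous h)
    (T : ℝ) : ContinuousOn (riemannLiouville α h) (Icc 0 T) := by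
  obtain ⟨M, hM⟩ := isCompact_Icc.exists_bound_of_continuousOn (hh.continuousOn (s := Icc 0 T))
  set F : ℝ → ℝ → E := fun t => (Iic t).indicator (fun u => u ^ (α - 1) • h (t - u))
  have hF : ContinuousOn (fun t => ∫ u in Ioc 0 T, F t u) (Icc 0 T) := by
    intro t₀ ht₀
    have hT : 0 ≤ T := ht₀.1.trans ht₀.2
    have hM0 : 0 ≤ M := (norm_nonneg _).trans (hM 0 ⟨le_rfl, hT⟩)
    refine continuousWithinAt_of_dominated (bound := fun u => u ^ (α - 1) * M) ?_ ?_ ?_ ?_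
    · refine Filter.Eventually.of_forall fun t => ?_
      exact ((measurable_id.pow_const _).aestronglyMeasurable.smul
        (by fun_prop : Continuous fun u => h (t - u)).aestronglyMeasurable).indicator
        measurableSet_Iic
    · filter_upwards [self_mem_nhdsWithin] with t ht
      filter_upwards [ae_restrict_mem measurableSet_Ioc] with u hu
      have hk : 0 ≤ u ^ (α - 1) := rpow_nonneg hu.1.le _
      by_cases hut : u ≤ t
      · simp only [F, indicator_of_mem (show u ∈ Iic t from hut), norm_smul, norm_of_nonneg hk]
        exact mul_le_mul_of_nonneg_left (hM _ ⟨sub_nonneg.2 hut, by linarith [hu.1, ht.2]⟩) hk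
      · simp only [F, indicator_of_notMem (show u ∉ Iic t from hut), norm_zero]
        exact mul_nonneg hk hM0
    · have := intervalIntegral.intervalIntegrable_rpow' (a := 0) (b := T) (r := α - 1)
        (by linarith)
      exact ((intervalIntegrable_iff_integrableOn_Ioc_of_le hT).1 this).mul_const M
    · filter_upwards [ae_restrict_of_ae (compl_mem_ae_iff.2 (measure_singleton t₀))] with u hu
      have hcont : ContinuousOn (fun t => F t u) {u}ᶜ := by
        simp only [F, indicator, mem_Iic]
        refine ContinuousOn.if (fun t ht => ?_) (by fun_prop) continuousOn_const
        exact absurd (frontier_Ici (a := u) ▸ ht.2) ht.1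
      exact (hcont.continuousAt (isOpen_compl_singleton.mem_nhds (Ne.symm hu))).continuousWithinAt
  refine (hF.const_smul (1 / Gamma α)).congr fun t ht => ?_
  simp only [riemannLiouville, intervalIntegral_rpow_sub_smul_eq_setIntegral ht, F,
    Pi.smul_apply]

section Volterra

variable {α T : ℝ} {g : E → E}

noncomputable def volterraMap (hα : 0 < α) (hg : Continuous g) (hT : 0 ≤ T) (f x : C(Icc 0 T, E)) :
    C(Icc 0 T, E) where
  toFun t := f t + riemannLiouville α (fun s => g (ContinuousMap.IccExtend hT x s)) t
  continuous_toFun := f.continuous.add <|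
    (continuousOn_riemannLiouville hα (hg.comp (ContinuousMap.IccExtend hT x).continuous)
      T).domRestrict

theorem volterraMap_mk_eq_iff (hα : 0 < α) (hg : Continuous g) (hT : 0 ≤ T) {f y : ℝ → E}
    (hf : ContinuousOn f (Icc 0 T)) (hy : ContinuousOn y (Icc 0 T)) :
    volterraMap hα hg hT ⟨_, hf.domRestrict⟩ ⟨_, hy.domRestrict⟩ = ⟨_, hy.domRestrict⟩ ↔
      ∀ t ∈ Icc 0 T, y t = f t + riemannLiouville α (fun s => g (y s)) t := by
  have hext : ∀ t ∈ Icc 0 T, riemannLiouville α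
      (fun s => g (ContinuousMap.IccExtend hT ⟨_, hy.domRestrict⟩ s)) t =
      riemannLiouville α (fun s => g (y s)) t := fun t ht =>
    riemannLiouville_congr ht.1 fun s hs => by
      simp [IccExtend_of_mem hT _ (Icc_subset_Icc_right ht.2 hs)]
  simp only [ContinuousMap.ext_iff, Subtype.forall]
  refine forall₂_congr fun t ht => ?_
  rw [← hext t ht, eq_comm]
  rfl

theorem exp_neg_mul_norm_volterraMap_sub_le (hα : 0 < α) {K : ℝ≥0} (hg : LipschitzWith K g)
    (hT : 0 ≤ T) (f : C(Icc 0 T, E)) {c : ℝ} (hc : 0 < c) (x y : C(Icc 0 T, E)) (D : ℝ)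
    (hD : ∀ q : Icc 0 T, exp (-(c * q)) * ‖x q - y q‖ ≤ D) (p : Icc 0 T) :
    exp (-(c * p)) *
        ‖volterraMap hα hg.continuous hT f x p - volterraMap hα hg.continuous hT f y p‖ ≤
      K / c ^ α * D := by
  set x' := ContinuousMap.IccExtend hT x
  set y' := ContinuousMap.IccExtend hT y
  have hbound : ∀ s ∈ Icc 0 (p : ℝ), ‖g (x' s) - g (y' s)‖ ≤ K * D * exp (c * s) := by
    intro s hs
    have hsT : s ∈ Icc 0 T := Icc_subset_Icc_right p.2.2 hs
    have hxy : ‖x ⟨s, hsT⟩ - y ⟨s, hsT⟩‖ ≤ exp (c * s) * D := by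
      rw [← inv_mul_le_iff₀ (exp_pos _), ← exp_neg]
      exact hD ⟨s, hsT⟩
    calc ‖g (x' s) - g (y' s)‖ ≤ K * ‖x' s - y' s‖ := hg.norm_sub_le _ _
      _ = K * ‖x ⟨s, hsT⟩ - y ⟨s, hsT⟩‖ := by simp [x', y', IccExtend_of_mem hT _ hsT]
      _ ≤ K * D * exp (c * s) := by rw [mul_assoc, mul_comm D]; gcongr
  have hsub : volterraMap hα hg.continuous hT f x p - volterraMap hα hg.continuous hT f y p =
      riemannLiouville α (fun s => g (x' s) - g (y' s)) p := by
    rw [riemannLiouville_sub (h₁ := fun s => g (x' s)) (h₂ := fun s => g (y' s)) hα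
      (hg.continuous.comp x'.continuous).continuousOn
      (hg.continuous.comp y'.continuous).continuousOn]
    exact add_sub_add_left_eq_sub _ _ _
  calc exp (-(c * p)) * ‖volterraMap hα hg.continuous hT f x p -
        volterraMap hα hg.continuous hT f y p‖
      ≤ exp (-(c * p)) * (K * D * exp (c * p) / c ^ α) := by
        rw [hsub]
        gcongr
        exact norm_riemannLiouville_le hα hc p.2.1 hbound
    _ = K / c ^ α * D := by
        rw [exp_neg]
        field_simp

theorem existsUnique_volterraMap_fixedPoint [CompleteSpace E] (hα : 0 < α) {K : ℝ≥0}
    (hg : LipschitzWith K g) (hT : 0 ≤ T) (f : C(Icc 0 T, E)) :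
    ∃! x, volterraMap hα hg.continuous hT f x = x := by
  set c := ((K : ℝ) + 1) ^ α⁻¹
  have hc : 0 < c := by positivity
  have hcα : c ^ α = K + 1 := rpow_inv_rpow (by positivity) hα.ne'
  refine ContinuousMap.existsUnique_fixedPoint_of_weighted_contraction
    (w := fun p : Icc 0 T => exp (-(c * p)))
    (by fun_prop) (fun _ => exp_pos _) (K := K / (K + 1)) ?_ _ fun x y D hD p => ?_
  · rw [div_lt_one (by positivity)]; exact lt_add_one K
  · simpa [hcα] using exp_neg_mul_norm_volterraMap_sub_le hα hg hT f hc x y D hD p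

end Volterra

theorem stmt0_general {d : ℕ} (α : ℝ) (hα : α ∈ Set.Ioo (0:ℝ) 1)
    (g : EuclideanSpace ℝ (Fin d) → EuclideanSpace ℝ (Fin d))
    (L : ℝ)
    (hg : ∀ x y : EuclideanSpace ℝ (Fin d), ‖g x - g y‖ ≤ L * ‖x - y‖)
    (T : ℝ) (hT : 0 < T)
    (f : ℝ → EuclideanSpace ℝ (Fin d)) (hf : ContinuousOn f (Set.Icc 0 T)) :
    ∃ x : ℝ → EuclideanSpace ℝ (Fin d),
      (ContinuousOn x (Set.Icc 0 T) ∧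
        ∀ t ∈ Set.Icc 0 T,
          x t = f t + (1 / Real.Gamma α) •
            ∫ s in (0:ℝ)..t, ((t - s) ^ (α - 1)) • g (x s)) ∧
      ∀ y : ℝ → EuclideanSpace ℝ (Fin d),
        ContinuousOn y (Set.Icc 0 T) →
        (∀ t ∈ Set.Icc 0 T,
          y t = f t + (1 / Real.Gamma α) •
            ∫ s in (0:ℝ)..t, ((t - s) ^ (α - 1)) • g (y s)) →
        ∀ t ∈ Set.Icc 0 T, y t = x t := by
  have hgL : LipschitzWith L.toNNReal g :=
    .of_dist_le' fun x y => by simpa only [dist_eq_norm] using hg x y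
  obtain ⟨x, hx, hx_unique⟩ :=
    existsUnique_volterraMap_fixedPoint hα.1 hgL hT.le ⟨_, hf.domRestrict⟩
  set x' := ContinuousMap.IccExtend hT.le x
  have hx' : (⟨_, x'.continuous.continuousOn.domRestrict⟩ : C(Icc 0 T, _)) = x := by
    ext t
    simp [x']
  refine ⟨x', ⟨x'.continuous.continuousOn,
    (volterraMap_mk_eq_iff hα.1 hgL.continuous hT.le hf x'.continuous.continuousOn).1 ?_⟩,
    fun y hy hy_eq t ht => ?_⟩
  · rwa [hx']
  · have hyx := hx_unique _ ((volterraMap_mk_eq_iff hα.1 hgL.continuous hT.le hf hy).2 hy_eq)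
    simpa [x', IccExtend_of_mem hT.le _ ht] using congr($hyx ⟨t, ht⟩)

theorem stmt0 {d : ℕ} (α : ℝ) (hα : α ∈ Set.Ioo (0:ℝ) 1)
    (g : EuclideanSpace ℝ (Fin d) → EuclideanSpace ℝ (Fin d))
    (L : ℝ) (hL : 0 < L)
    (hg : ∀ x y : EuclideanSpace ℝ (Fin d), ‖g x - g y‖ ≤ L * ‖x - y‖)
    (T : ℝ) (hT : 0 < T)
    (f : ℝ → EuclideanSpace ℝ (Fin d)) (hf : ContinuousOn f (Set.Icc 0 T)) :
    ∃ x : ℝ → EuclideanSpace ℝ (Fin d),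
      (ContinuousOn x (Set.Icc 0 T) ∧
        ∀ t ∈ Set.Icc 0 T,
          x t = f t + (1 / Real.Gamma α) •
            ∫ s in (0:ℝ)..t, ((t - s) ^ (α - 1)) • g (x s)) ∧
      ∀ y : ℝ → EuclideanSpace ℝ (Fin d),
        ContinuousOn y (Set.Icc 0 T) →
        (∀ t ∈ Set.Icc 0 T,
          y t = f t + (1 / Real.Gamma α) •
            ∫ s in (0:ℝ)..t, ((t - s) ^ (α - 1)) • g (y s)) →
        ∀ t ∈ Set.Icc 0 T, y t = x t :=
  stmt0_general α hα g L hg T hT f hf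
end

section
/- Let α ∈ (0,1), let g : ℝ^d → ℝ^d satisfy a global Lipschitz condition with constant L > 0, let T > 0, let f : [0,T] → ℝ^d be continuous, and let γ > 0. Define the operator 𝔗 on C([0,T], ℝ^d) by (𝔗x)(t) = f(t) + (1/Γ(α)) ∫₀ᵗ (t−s)^{α−1} g(x(s)) ds. Then for all x, y ∈ C([0,T], ℝ^d), ‖𝔗x − 𝔗y‖_γ ≤ (L/γ) ‖x − y‖_γ, where ‖·‖_γ is the Bielecki-type weighted norm. In particular, if γ > L then 𝔗 is a contraction on (C([0,T], ℝ^d), ‖·‖_γ). -/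
open Real MeasureTheory Set

/-- The Mittag-Leffler function `E_α(t) = ∑_{k=0}^∞ t^k / Γ(αk+1)`. -/
noncomputable def mittagLeffler (α t : ℝ) : ℝ :=
  ∑' k : ℕ, t ^ k / Real.Gamma (α * k + 1)

/-- The Bielecki-type weighted norm `‖x‖_γ = sup_{t∈[0,T]} ‖x(t)‖ / E_α(γ t^α)`. -/
noncomputable def bieleckiNorm {d : ℕ} (α γ T : ℝ)
    (x : ℝ → EuclideanSpace ℝ (Fin d)) : ℝ :=
  ⨆ t : Set.Icc (0:ℝ) T, ‖x t.1‖ / mittagLeffler α (γ * t.1 ^ α)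

/-- The operator `(𝔗x)(t) = f(t) + (1/Γ(α)) ∫₀ᵗ (t−s)^{α−1} g(x(s)) ds`. -/
noncomputable def volterraOp {d : ℕ} (α : ℝ)
    (g : EuclideanSpace ℝ (Fin d) → EuclideanSpace ℝ (Fin d))
    (f : ℝ → EuclideanSpace ℝ (Fin d))
    (x : ℝ → EuclideanSpace ℝ (Fin d)) : ℝ → EuclideanSpace ℝ (Fin d) :=
  fun t => f t + (1 / Real.Gamma α) •
    ∫ s in (0:ℝ)..t, ((t - s) ^ (α - 1)) • g (x s)

/-!
Integrating the Mittag-Leffler series term by term, the Beta integral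
`∫₀ᵗ (t-s)^(α-1) s^(αk) ds = Γ(α) Γ(αk+1) / Γ(αk+α+1) · t^(α(k+1))` shifts the series by one
index, so `(1/Γ(α)) ∫₀ᵗ (t-s)^(α-1) E_α(γ s^α) ds = (E_α(γ t^α) - 1) / γ`. Since
`‖g(x s) - g(y s)‖ ≤ L ‖x - y‖_γ E_α(γ s^α)`, this yields
`‖(𝔗x - 𝔗y)(t)‖ ≤ (L/γ) ‖x - y‖_γ E_α(γ t^α)` for every `t`.
-/

open Filter
open scoped NNReal

theorem integral_rpow_mul_one_sub_rpow {a b : ℝ} (ha : 0 < a) (hb : 0 < b) :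
    ∫ u in (0:ℝ)..1, u ^ (a - 1) * (1 - u) ^ (b - 1) = Gamma a * Gamma b / Gamma (a + b) := by
  have hβ : Complex.betaIntegral a b =
      ((∫ u in (0:ℝ)..1, u ^ (a - 1) * (1 - u) ^ (b - 1) : ℝ) : ℂ) := by
    rw [Complex.betaIntegral, ← intervalIntegral.integral_ofReal]
    refine intervalIntegral.integral_congr fun u hu => ?_
    rw [uIcc_of_le zero_le_one] at hu
    simp only [Complex.ofReal_mul, Complex.ofReal_cpow hu.1,
      Complex.ofReal_cpow (sub_nonneg.2 hu.2), Complex.ofReal_sub, Complex.ofReal_one]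
  have h := Complex.betaIntegral_eq_Gamma_mul_div a b (by simpa using ha) (by simpa using hb)
  rw [hβ, ← Complex.ofReal_add, Complex.Gamma_ofReal, Complex.Gamma_ofReal,
    Complex.Gamma_ofReal] at h
  exact_mod_cast h

theorem Real.Gamma_add_one_mul_rpow_le {x a : ℝ} (hx : 0 < x) (ha : 0 < a) :
    Gamma (x + 1) * x ^ a ≤ Gamma (x + 1 + a) := by
  -- `log ∘ Γ` is convex and its slope over `[x, x + 1]` is `log x`
  have hΓx := Gamma_pos_of_pos hx
  have hslope := convexOn_log_Gamma.slope_mono_adjacent (x := x) (y := x + 1) (z := x + 1 + a)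
    hx (by simp only [mem_Ioi]; linarith) (by linarith) (by linarith)
  simp only [Function.comp, add_sub_cancel_left, div_one] at hslope
  rw [Gamma_add_one hx.ne', log_mul hx.ne' hΓx.ne', le_div_iff₀ ha] at hslope
  have hlog : log (Gamma (x + 1) * x ^ a) ≤ log (Gamma (x + 1 + a)) := by
    rw [log_mul (by positivity) (by positivity), log_rpow hx, Gamma_add_one hx.ne',
      log_mul hx.ne' hΓx.ne']
    linarith
  exact (log_le_log_iff (by positivity) (Gamma_pos_of_pos (by positivity))).1 hlog

theorem summable_mittagLeffler_term {α : ℝ} (hα : 0 < α) (u : ℝ) :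
    Summable fun k : ℕ => u ^ k / Gamma (α * k + 1) := by
  refine summable_of_ratio_norm_eventually_le (r := 1 / 2) (by norm_num) ?_
  have hlarge : ∀ᶠ k : ℕ in atTop, (2 * |u| + 1) ^ α⁻¹ ≤ α * k :=
    (tendsto_natCast_atTop_atTop.const_mul_atTop hα).eventually_ge_atTop _
  filter_upwards [hlarge] with k hk
  have hαk : 0 < α * k := (rpow_pos_of_pos (by positivity) _).trans_le hk
  have hgrowth : (2 * |u| + 1) * Gamma (α * k + 1) ≤ Gamma (α * (k + 1 : ℕ) + 1) := by
    calc (2 * |u| + 1) * Gamma (α * k + 1)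
        ≤ (α * k) ^ α * Gamma (α * k + 1) := by
          gcongr
          rw [← rpow_inv_rpow (by positivity : 0 ≤ 2 * |u| + 1) hα.ne']
          gcongr
      _ ≤ Gamma (α * (k + 1 : ℕ) + 1) := by
          rw [mul_comm, show α * ((k + 1 : ℕ) : ℝ) + 1 = α * k + 1 + α by push_cast; ring]
          exact Gamma_add_one_mul_rpow_le hαk hα
  simp only [norm_div, norm_pow, norm_eq_abs]
  rw [abs_of_pos (Gamma_pos_of_pos (by positivity)),
    abs_of_pos (Gamma_pos_of_pos (by positivity))]
  calc |u| ^ (k + 1) / Gamma (α * (k + 1 : ℕ) + 1)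
      ≤ |u| ^ (k + 1) / ((2 * |u| + 1) * Gamma (α * k + 1)) := by gcongr
    _ = |u| / (2 * |u| + 1) * (|u| ^ k / Gamma (α * k + 1)) := by
      rw [pow_succ]; field_simp
    _ ≤ 1 / 2 * (|u| ^ k / Gamma (α * k + 1)) := by
      gcongr ?_ * _
      rw [div_le_div_iff₀ (by positivity) (by norm_num)]; linarith

theorem one_le_mittagLeffler {α u : ℝ} (hα : 0 < α) (hu : 0 ≤ u) : 1 ≤ mittagLeffler α u := by
  simpa [mittagLeffler] using (summable_mittagLeffler_term hα u).le_tsum 0 fun k _ => by positivity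

theorem continuous_mittagLeffler {α : ℝ} (hα : 0 < α) : Continuous (mittagLeffler α) := by
  have hIcc (R : ℝ) : ContinuousOn (mittagLeffler α) (Icc (-R) R) := by
    refine continuousOn_tsum (fun k => by fun_prop) (summable_mittagLeffler_term hα R)
      fun k u hu => ?_
    rw [norm_div, norm_pow, norm_eq_abs, norm_eq_abs,
      abs_of_pos (Gamma_pos_of_pos (by positivity))]
    gcongr
    exact abs_le.2 hu
  exact continuous_iff_continuousAt.2 fun u => (hIcc (|u| + 1)).continuousAt
    (Icc_mem_nhds (by linarith [neg_abs_le u]) (by linarith [le_abs_self u]))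

theorem intervalIntegrable_sub_rpow {r : ℝ} (hr : -1 < r) (t : ℝ) :
    IntervalIntegrable (fun s => (t - s) ^ r) volume 0 t := by
  simpa using
    ((intervalIntegral.intervalIntegrable_rpow' hr (a := 0) (b := t)).comp_sub_left t).symm

theorem integral_sub_rpow_mul_rpow {α c t : ℝ} (hα : 0 < α) (hc : -1 < c) (ht : 0 < t) :
    ∫ s in (0:ℝ)..t, (t - s) ^ (α - 1) * s ^ c =
      Gamma (c + 1) * Gamma α / Gamma (c + 1 + α) * t ^ (c + α) := by
  have hsubst := intervalIntegral.smul_integral_comp_mul_left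
    (fun s => (t - s) ^ (α - 1) * s ^ c) t (a := 0) (b := 1)
  rw [mul_zero, mul_one] at hsubst
  rw [← hsubst, smul_eq_mul, ← integral_rpow_mul_one_sub_rpow (by linarith) hα,
    ← intervalIntegral.integral_const_mul, ← intervalIntegral.integral_mul_const]
  refine intervalIntegral.integral_congr fun u hu => ?_
  rw [uIcc_of_le zero_le_one] at hu
  rw [show t - t * u = t * (1 - u) by ring, mul_rpow ht.le (sub_nonneg.2 hu.2),
    mul_rpow ht.le hu.1, add_sub_cancel_right,
    show c + α = 1 + (α - 1) + c by ring, rpow_add ht, rpow_add ht, rpow_one]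
  ring

theorem integral_sub_rpow_mul_mittagLeffler_term {α γ t : ℝ} (hα : 0 < α) (hγ : γ ≠ 0)
    (ht : 0 < t) (k : ℕ) :
    ∫ s in (0:ℝ)..t, (t - s) ^ (α - 1) * ((γ * s ^ α) ^ k / Gamma (α * k + 1)) =
      Gamma α / γ * ((γ * t ^ α) ^ (k + 1) / Gamma (α * (k + 1 : ℕ) + 1)) := by
  have hpow {s : ℝ} (hs : 0 ≤ s) (n : ℕ) : (γ * s ^ α) ^ n = γ ^ n * s ^ (α * n) := by
    rw [mul_pow, ← rpow_natCast (s ^ α), ← rpow_mul hs]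
  calc ∫ s in (0:ℝ)..t, (t - s) ^ (α - 1) * ((γ * s ^ α) ^ k / Gamma (α * k + 1))
      = γ ^ k / Gamma (α * k + 1) * ∫ s in (0:ℝ)..t, (t - s) ^ (α - 1) * s ^ (α * k) := by
        rw [← intervalIntegral.integral_const_mul]
        refine intervalIntegral.integral_congr fun s hs => ?_
        rw [uIcc_of_le ht.le] at hs
        simp only [hpow hs.1]
        ring
    _ = Gamma α / γ * ((γ * t ^ α) ^ (k + 1) / Gamma (α * (k + 1 : ℕ) + 1)) := by
        have hαk : -1 < α * k := by linarith [show 0 ≤ α * k by positivity]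
        rw [integral_sub_rpow_mul_rpow hα hαk ht, hpow ht.le]
        push_cast
        rw [mul_add, mul_one, rpow_add ht, pow_succ]
        have := Gamma_pos_of_pos (show 0 < α * k + 1 by positivity)
        field_simp
        ring_nf

theorem integral_sub_rpow_mul_mittagLeffler {α γ t : ℝ} (hα : 0 < α) (hγ : γ ≠ 0)
    (ht : 0 < t) :
    ∫ s in (0:ℝ)..t, (t - s) ^ (α - 1) * mittagLeffler α (γ * s ^ α) =
      Gamma α / γ * (mittagLeffler α (γ * t ^ α) - 1) := by
  set F : ℕ → ℝ → ℝ := fun k s => (t - s) ^ (α - 1) * ((γ * s ^ α) ^ k / Gamma (α * k + 1))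
  have hint (k : ℕ) : IntegrableOn (F k) (Ioc 0 t) := by
    have hcont : ContinuousOn (fun s : ℝ => (γ * s ^ α) ^ k / Gamma (α * k + 1)) (uIcc 0 t) :=
      (((continuous_rpow_const hα.le).const_mul γ).pow k).div_const _ |>.continuousOn
    exact (intervalIntegrable_iff_integrableOn_Ioc_of_le ht.le).1
      ((intervalIntegrable_sub_rpow (by linarith) t).mul_continuousOn hcont)
  have hnorm (k : ℕ) : ∫ s in Ioc 0 t, ‖F k s‖ =
      Gamma α / |γ| * ((|γ| * t ^ α) ^ (k + 1) / Gamma (α * (k + 1 : ℕ) + 1)) := by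
    rw [← integral_sub_rpow_mul_mittagLeffler_term hα (abs_ne_zero.2 hγ) ht k,
      intervalIntegral.integral_of_le ht.le]
    refine setIntegral_congr_fun measurableSet_Ioc fun s hs => ?_
    have := Gamma_pos_of_pos (show 0 < α * k + 1 by positivity)
    simp only [F, norm_mul, norm_div, norm_pow, norm_eq_abs, abs_of_pos this,
      abs_of_nonneg (rpow_nonneg (sub_nonneg.2 hs.2) _), abs_of_pos (rpow_pos_of_pos hs.1 _)]
  have hsum : Summable fun k => ∫ s in Ioc 0 t, ‖F k s‖ := by
    simp only [hnorm]
    exact ((summable_nat_add_iff 1).2 (summable_mittagLeffler_term hα _)).mul_left _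
  calc ∫ s in (0:ℝ)..t, (t - s) ^ (α - 1) * mittagLeffler α (γ * s ^ α)
      = ∫ s in Ioc 0 t, ∑' k, F k s := by
        rw [intervalIntegral.integral_of_le ht.le]
        simp only [F, tsum_mul_left, mittagLeffler]
    _ = ∑' k, Gamma α / γ * ((γ * t ^ α) ^ (k + 1) / Gamma (α * (k + 1 : ℕ) + 1)) := by
        rw [← integral_tsum_of_summable_integral_norm hint hsum]
        congr 1 with k
        rw [← integral_sub_rpow_mul_mittagLeffler_term hα hγ ht k,
          intervalIntegral.integral_of_le ht.le]
    _ = Gamma α / γ * (mittagLeffler α (γ * t ^ α) - 1) := by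
        rw [tsum_mul_left, mittagLeffler, (summable_mittagLeffler_term hα _).tsum_eq_zero_add]
        simp

theorem norm_integral_sub_rpow_smul_le {E : Type*} [NormedAddCommGroup E] [NormedSpace ℝ E]
    {α γ t C : ℝ} (hα : 0 < α) (hγ : 0 < γ) (ht : 0 ≤ t) (hC : 0 ≤ C) {F : ℝ → E}
    (hF : ∀ s ∈ Ioc 0 t, ‖F s‖ ≤ C * mittagLeffler α (γ * s ^ α)) :
    ‖∫ s in (0:ℝ)..t, (t - s) ^ (α - 1) • F s‖ ≤
      C * Gamma α / γ * mittagLeffler α (γ * t ^ α) := by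
  rcases ht.eq_or_lt with rfl | ht
  · have := one_le_mittagLeffler hα le_rfl
    simpa [zero_rpow hα.ne'] using by positivity
  have hcont : ContinuousOn (fun s => C * mittagLeffler α (γ * s ^ α)) (uIcc 0 t) :=
    (continuous_const.mul ((continuous_mittagLeffler hα).comp
      ((continuous_rpow_const hα.le).const_mul γ))).continuousOn
  calc ‖∫ s in (0:ℝ)..t, (t - s) ^ (α - 1) • F s‖
      ≤ ∫ s in (0:ℝ)..t, (t - s) ^ (α - 1) * (C * mittagLeffler α (γ * s ^ α)) := by
        refine intervalIntegral.norm_integral_le_of_norm_le ht.le (ae_of_all _ fun s hs => ?_)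
          ((intervalIntegrable_sub_rpow (by linarith) t).mul_continuousOn hcont)
        rw [norm_smul, norm_of_nonneg (rpow_nonneg (sub_nonneg.2 hs.2) _)]
        exact mul_le_mul_of_nonneg_left (hF s hs) (rpow_nonneg (sub_nonneg.2 hs.2) _)
    _ = C * (Gamma α / γ * (mittagLeffler α (γ * t ^ α) - 1)) := by
        simp only [mul_left_comm _ C, intervalIntegral.integral_const_mul,
          integral_sub_rpow_mul_mittagLeffler hα hγ.ne' ht]
    _ ≤ C * Gamma α / γ * mittagLeffler α (γ * t ^ α) := by
        rw [mul_div_assoc, mul_assoc]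
        gcongr
        linarith

section Volterra

variable {d : ℕ} {α : ℝ} {g : EuclideanSpace ℝ (Fin d) → EuclideanSpace ℝ (Fin d)}
  {f x y : ℝ → EuclideanSpace ℝ (Fin d)}

theorem volterraOp_sub_apply {t : ℝ}
    (hx : IntervalIntegrable (fun s => (t - s) ^ (α - 1) • g (x s)) volume 0 t)
    (hy : IntervalIntegrable (fun s => (t - s) ^ (α - 1) • g (y s)) volume 0 t) :
    volterraOp α g f x t - volterraOp α g f y t =
      (1 / Gamma α) • ∫ s in (0:ℝ)..t, (t - s) ^ (α - 1) • (g (x s) - g (y s)) := by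
  simp only [volterraOp, smul_sub, intervalIntegral.integral_sub hx hy]
  abel

theorem norm_volterraOp_sub_le {γ t N : ℝ} {K : ℝ≥0} (hα : 0 < α) (hγ : 0 < γ) (ht : 0 ≤ t)
    (hN : 0 ≤ N) (hg : LipschitzWith K g) (hx : ContinuousOn x (Icc 0 t))
    (hy : ContinuousOn y (Icc 0 t))
    (hxy : ∀ s ∈ Icc 0 t, ‖x s - y s‖ ≤ N * mittagLeffler α (γ * s ^ α)) :
    ‖volterraOp α g f x t - volterraOp α g f y t‖ ≤
      K / γ * N * mittagLeffler α (γ * t ^ α) := by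
  have hkernel := intervalIntegrable_sub_rpow (show -1 < α - 1 by linarith) t
  rw [← uIcc_of_le ht] at hx hy
  rw [volterraOp_sub_apply (hkernel.smul_continuousOn (hg.continuous.comp_continuousOn hx))
    (hkernel.smul_continuousOn (hg.continuous.comp_continuousOn hy)), norm_smul,
    norm_of_nonneg (by positivity)]
  have hbound := norm_integral_sub_rpow_smul_le (F := fun s => g (x s) - g (y s)) hα hγ ht
    (mul_nonneg K.2 hN) fun s hs => by
      rw [mul_assoc]
      exact hg.norm_sub_le_of_le (hxy s (Ioc_subset_Icc_self hs))
  calc 1 / Gamma α * ‖∫ s in (0:ℝ)..t, (t - s) ^ (α - 1) • (g (x s) - g (y s))‖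
      ≤ 1 / Gamma α * (K * N * Gamma α / γ * mittagLeffler α (γ * t ^ α)) :=
        mul_le_mul_of_nonneg_left hbound (by positivity)
    _ = K / γ * N * mittagLeffler α (γ * t ^ α) := by
      have := Gamma_pos_of_pos hα
      field_simp

end Volterra

section Bielecki

variable {d : ℕ} {α γ T : ℝ} {x : ℝ → EuclideanSpace ℝ (Fin d)}

theorem bieleckiNorm_nonneg (hα : 0 < α) (hγ : 0 ≤ γ) : 0 ≤ bieleckiNorm α γ T x :=
  iSup_nonneg fun t =>
    div_nonneg (norm_nonneg _) (zero_le_one.trans (one_le_mittagLeffler hα (by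
      have := t.2.1; positivity)))

theorem norm_le_bieleckiNorm_mul (hα : 0 < α) (hγ : 0 ≤ γ) (hx : ContinuousOn x (Icc 0 T))
    {s : ℝ} (hs : s ∈ Icc 0 T) :
    ‖x s‖ ≤ bieleckiNorm α γ T x * mittagLeffler α (γ * s ^ α) := by
  have hE (t : ℝ) (ht : 0 ≤ t) : 1 ≤ mittagLeffler α (γ * t ^ α) :=
    one_le_mittagLeffler hα (by positivity)
  obtain ⟨M, hM⟩ := isCompact_Icc.exists_bound_of_continuousOn hx
  have hbdd : BddAbove (range fun t : Icc 0 T => ‖x t‖ / mittagLeffler α (γ * (t : ℝ) ^ α)) :=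
    ⟨M, forall_mem_range.2 fun t =>
      (div_le_self (norm_nonneg _) (hE t t.2.1)).trans (hM t t.2)⟩
  rw [← div_le_iff₀ (zero_lt_one.trans_le (hE s hs.1))]
  exact le_ciSup hbdd ⟨s, hs⟩

theorem bieleckiNorm_le {C : ℝ} (hα : 0 < α) (hγ : 0 ≤ γ) (hC : 0 ≤ C)
    (hx : ∀ t ∈ Icc 0 T, ‖x t‖ ≤ C * mittagLeffler α (γ * t ^ α)) :
    bieleckiNorm α γ T x ≤ C :=
  Real.iSup_le (fun t => div_le_of_le_mul₀ (zero_le_one.trans (one_le_mittagLeffler hα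
    (by have := t.2.1; positivity))) hC (hx t t.2)) hC

end Bielecki

theorem stmt1_general {d : ℕ} (α : ℝ) (hα : α ∈ Set.Ioo (0:ℝ) 1)
    (g : EuclideanSpace ℝ (Fin d) → EuclideanSpace ℝ (Fin d))
    (L : ℝ) (hL : 0 < L)
    (hg : ∀ x y : EuclideanSpace ℝ (Fin d), ‖g x - g y‖ ≤ L * ‖x - y‖)
    (T : ℝ)
    (f : ℝ → EuclideanSpace ℝ (Fin d))
    (γ : ℝ) (hγ : 0 < γ) :
    (∀ x y : ℝ → EuclideanSpace ℝ (Fin d),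
      ContinuousOn x (Set.Icc 0 T) → ContinuousOn y (Set.Icc 0 T) →
      bieleckiNorm α γ T (volterraOp α g f x - volterraOp α g f y) ≤
        (L / γ) * bieleckiNorm α γ T (x - y)) ∧
    (L < γ →
      ∃ q : ℝ, q < 1 ∧ 0 ≤ q ∧
        ∀ x y : ℝ → EuclideanSpace ℝ (Fin d),
          ContinuousOn x (Set.Icc 0 T) → ContinuousOn y (Set.Icc 0 T) →
          bieleckiNorm α γ T (volterraOp α g f x - volterraOp α g f y) ≤
            q * bieleckiNorm α γ T (x - y)) := by
  have hLip : LipschitzWith L.toNNReal g := .of_dist_le_mul fun a b => by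
    simpa only [dist_eq_norm, Real.coe_toNNReal _ hL.le] using hg a b
  have hcontract (x y : ℝ → EuclideanSpace ℝ (Fin d)) (hx : ContinuousOn x (Icc 0 T))
      (hy : ContinuousOn y (Icc 0 T)) :
      bieleckiNorm α γ T (volterraOp α g f x - volterraOp α g f y) ≤
        L / γ * bieleckiNorm α γ T (x - y) := by
    have hN := bieleckiNorm_nonneg (T := T) (x := x - y) hα.1 hγ.le
    refine bieleckiNorm_le hα.1 hγ.le (by positivity) fun t ht => ?_
    have hsub : Icc 0 t ⊆ Icc 0 T := Icc_subset_Icc_right ht.2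
    simpa only [Pi.sub_apply, Real.coe_toNNReal _ hL.le] using
      norm_volterraOp_sub_le hα.1 hγ ht.1 hN hLip (hx.mono hsub) (hy.mono hsub)
        fun s hs => norm_le_bieleckiNorm_mul hα.1 hγ.le (hx.sub hy) (hsub hs)
  exact ⟨hcontract, fun hLγ => ⟨L / γ, (div_lt_one hγ).2 hLγ, by positivity, hcontract⟩⟩

theorem stmt1 {d : ℕ} (α : ℝ) (hα : α ∈ Set.Ioo (0:ℝ) 1)
    (g : EuclideanSpace ℝ (Fin d) → EuclideanSpace ℝ (Fin d))
    (L : ℝ) (hL : 0 < L)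
    (hg : ∀ x y : EuclideanSpace ℝ (Fin d), ‖g x - g y‖ ≤ L * ‖x - y‖)
    (T : ℝ) (hT : 0 < T)
    (f : ℝ → EuclideanSpace ℝ (Fin d)) (hf : ContinuousOn f (Set.Icc 0 T))
    (γ : ℝ) (hγ : 0 < γ) :
    (∀ x y : ℝ → EuclideanSpace ℝ (Fin d),
      ContinuousOn x (Set.Icc 0 T) → ContinuousOn y (Set.Icc 0 T) →
      bieleckiNorm α γ T (volterraOp α g f x - volterraOp α g f y) ≤
        (L / γ) * bieleckiNorm α γ T (x - y)) ∧
    (L < γ →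
      ∃ q : ℝ, q < 1 ∧ 0 ≤ q ∧
        ∀ x y : ℝ → EuclideanSpace ℝ (Fin d),
          ContinuousOn x (Set.Icc 0 T) → ContinuousOn y (Set.Icc 0 T) →
          bieleckiNorm α γ T (volterraOp α g f x - volterraOp α g f y) ≤
            q * bieleckiNorm α γ T (x - y)) :=
  stmt1_general α hα g L hL hg T f γ hγ
end

section
/- Let α ∈ (0,1), let g : ℝ^d → ℝ^d satisfy a global Lipschitz condition with constant L > 0, let T > 0, and let f, h : [0,T] → ℝ^d be continuous, with x_f, x_h the unique continuous solutions of the corresponding singular Volterra integral equations with kernel (1/Γ(α))(t−s)^{α−1} and forcing terms f and h. Then for every t ∈ [0,T], ‖x_f(t) − x_h(t)‖ ≤ (sup_{s∈[0,t]} ‖f(s) − h(s)‖) · E_α(L t^α). -/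
/-!
Subtracting the two equations and using the Lipschitz bound, `φ t = ‖x_f t - x_h t‖` satisfies the
fractional Gronwall inequality `φ τ ≤ M + L / Γ(α) * ∫₀^τ (τ - s)^(α-1) φ s` on `[0, t]`, where
`M` is the supremum of `‖f - h‖` on `[0, t]`. Iterating it `n` times, the Beta integral
`∫₀^τ (τ - s)^(α-1) s^(αk) = Γ(α) Γ(αk+1) / Γ(α(k+1)+1) τ^(α(k+1))` turns the iterates into the
partial sums of `E_α(L τ^α)`, and the remainder is at most `sup φ` times the `n`-th term of that
series. The series converges by the ratio test, since `Γ(y + α) ≥ Γ(y) (y - 1)^α` by the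
log-convexity of `Γ`.
-/

open Real MeasureTheory Set

open Filter Topology

namespace Real

theorem Gamma_mul_rpow_le_Gamma_add {y a : ℝ} (hy : 1 < y) (ha : 0 < a) :
    Gamma y * (y - 1) ^ a ≤ Gamma (y + a) := by
  have hy₁ : 0 < y - 1 := sub_pos.2 hy
  have hlog : log (Gamma y) + a * log (y - 1) ≤ log (Gamma (y + a)) := by
    have slope := (convexOn_iff_slope_mono_adjacent.mp convexOn_log_Gamma).2 hy₁
      (by linarith : 0 < y + a) (sub_one_lt y) (lt_add_of_pos_right y ha)
    have hrec : log (Gamma (y - 1)) = log (Gamma y) - log (y - 1) := by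
      rw [← sub_add_cancel y 1, Gamma_add_one hy₁.ne', log_mul hy₁.ne' (Gamma_pos_of_pos hy₁).ne']
      simp
    simp only [Function.comp_apply, hrec, sub_sub_cancel, div_one, add_sub_cancel_left] at slope
    rw [le_div_iff₀ ha] at slope
    linarith
  rw [← log_le_log_iff (by positivity [Gamma_pos_of_pos (by linarith : 0 < y)])
    (Gamma_pos_of_pos (by linarith)), log_mul (Gamma_pos_of_pos (by linarith)).ne'
    (by positivity), log_rpow hy₁]
  linarith

theorem integral_rpow_mul_sub_rpow {u v a : ℝ} (hu : 0 < u) (hv : 0 < v) (ha : 0 < a) :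
    ∫ x in (0:ℝ)..a, x ^ (u - 1) * (a - x) ^ (v - 1) =
      Gamma u * Gamma v / Gamma (u + v) * a ^ (u + v - 1) := by
  rw [← Complex.ofReal_inj, ← intervalIntegral.integral_ofReal]
  have hcpow : ∀ x ∈ uIcc 0 a, ((x ^ (u - 1) * (a - x) ^ (v - 1) : ℝ) : ℂ) =
      (x : ℂ) ^ ((u : ℂ) - 1) * ((a : ℂ) - x) ^ ((v : ℂ) - 1) := by
    intro x hx
    rw [uIcc_of_le ha.le] at hx
    rw [Complex.ofReal_mul, Complex.ofReal_cpow hx.1, Complex.ofReal_cpow (sub_nonneg.2 hx.2)]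
    push_cast
    rfl
  rw [intervalIntegral.integral_congr hcpow, Complex.betaIntegral_scaled _ _ ha,
    Complex.betaIntegral_eq_Gamma_mul_div _ _ (by simpa) (by simpa)]
  push_cast
  rw [Complex.ofReal_cpow ha.le, ← Complex.ofReal_add, Complex.Gamma_ofReal, Complex.Gamma_ofReal,
    Complex.Gamma_ofReal]
  push_cast
  ring

end Real

noncomputable def mittagLefflerTerm (α x : ℝ) (k : ℕ) : ℝ :=
  x ^ k / Gamma (α * k + 1)

section

variable {α : ℝ}

theorem summable_mittagLefflerTerm (hα : 0 < α) (x : ℝ) : Summable (mittagLefflerTerm α x) := by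
  refine summable_of_ratio_norm_eventually_le (r := 1 / 2) (by norm_num) ?_
  have hgrow : Tendsto (fun k : ℕ => (α * k) ^ α) atTop atTop :=
    (tendsto_rpow_atTop hα).comp (tendsto_natCast_atTop_atTop.const_mul_atTop hα)
  filter_upwards [hgrow.eventually_ge_atTop (2 * |x|), eventually_gt_atTop 0] with k hk hk₀
  have hΓ : 0 < Gamma (α * k + 1) := Gamma_pos_of_pos (by positivity)
  have hΓ' : Gamma (α * k + 1) * (2 * |x|) ≤ Gamma (α * ↑(k + 1) + 1) := by
    have hy : 1 < α * k + 1 := by simp only [lt_add_iff_pos_left]; positivity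
    calc Gamma (α * k + 1) * (2 * |x|) ≤ Gamma (α * k + 1) * (α * k + 1 - 1) ^ α := by
          rw [add_sub_cancel_right]; gcongr
      _ ≤ Gamma (α * k + 1 + α) := Gamma_mul_rpow_le_Gamma_add hy hα
      _ = Gamma (α * ↑(k + 1) + 1) := by push_cast; ring_nf
  have hΓ₁ : 0 < Gamma (α * ↑(k + 1) + 1) := Gamma_pos_of_pos (by positivity)
  simp only [mittagLefflerTerm, norm_div, norm_pow, Real.norm_eq_abs, abs_of_pos hΓ,
    abs_of_pos hΓ₁]
  rw [div_le_iff₀ hΓ₁, pow_succ]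
  calc |x| ^ k * |x|
        = 1 / 2 * (|x| ^ k / Gamma (α * k + 1)) * (Gamma (α * k + 1) * (2 * |x|)) := by
          field_simp
    _ ≤ 1 / 2 * (|x| ^ k / Gamma (α * k + 1)) * Gamma (α * ↑(k + 1) + 1) := by gcongr

theorem intervalIntegrable_sub_rpow_smul {E : Type*} [NormedAddCommGroup E] [NormedSpace ℝ E]
    (hα : 0 < α) {τ : ℝ} (hτ : 0 ≤ τ) {φ : ℝ → E} (hφ : ContinuousOn φ (Icc 0 τ)) :
    IntervalIntegrable (fun s => (τ - s) ^ (α - 1) • φ s) volume 0 τ := by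
  have hK : IntervalIntegrable (fun s => (τ - s) ^ (α - 1)) volume 0 τ := by
    simpa using ((intervalIntegral.intervalIntegrable_rpow' (a := 0) (b := τ)
      (by linarith : (-1:ℝ) < α - 1)).comp_sub_left τ).symm
  rw [intervalIntegrable_iff_integrableOn_Icc_of_le hτ] at hK ⊢
  exact hK.smul_continuousOn hφ isCompact_Icc

theorem mittagLefflerTerm_mul_rpow (L : ℝ) {s : ℝ} (hs : 0 ≤ s) (k : ℕ) :
    mittagLefflerTerm α (L * s ^ α) k = L ^ k * s ^ (α * k) / Gamma (α * k + 1) := by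
  rw [mittagLefflerTerm, mul_pow, ← rpow_natCast (s ^ α), ← rpow_mul hs]

theorem integral_sub_rpow_mul_mittagLefflerTerm (hα : 0 < α) (L : ℝ) {τ : ℝ} (hτ : 0 ≤ τ)
    (k : ℕ) :
    L / Gamma α * ∫ s in (0:ℝ)..τ, (τ - s) ^ (α - 1) * mittagLefflerTerm α (L * s ^ α) k =
      mittagLefflerTerm α (L * τ ^ α) (k + 1) := by
  rcases hτ.eq_or_lt with rfl | hτ
  · simp [mittagLefflerTerm, zero_rpow hα.ne']
  have hint : ∫ s in (0:ℝ)..τ, (τ - s) ^ (α - 1) * mittagLefflerTerm α (L * s ^ α) k =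
      L ^ k / Gamma (α * k + 1) * ∫ s in (0:ℝ)..τ, s ^ (α * k + 1 - 1) * (τ - s) ^ (α - 1) := by
    rw [← intervalIntegral.integral_const_mul]
    refine intervalIntegral.integral_congr fun s hs => ?_
    rw [uIcc_of_le hτ.le] at hs
    simp only [mittagLefflerTerm_mul_rpow L hs.1, add_sub_cancel_right]
    ring
  have hΓ : 0 < Gamma α := Gamma_pos_of_pos hα
  have hΓk : 0 < Gamma (α * k + 1) := Gamma_pos_of_pos (by positivity)
  rw [hint, integral_rpow_mul_sub_rpow (by positivity) hα hτ,
    mittagLefflerTerm_mul_rpow L hτ.le, show α * k + 1 + α - 1 = α * ↑(k + 1) by push_cast; ring,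
    show α * k + 1 + α = α * ↑(k + 1) + 1 by push_cast; ring]
  field_simp
  ring

theorem continuous_mittagLefflerTerm_mul_rpow (hα : 0 ≤ α) (L : ℝ) (k : ℕ) :
    Continuous fun s => mittagLefflerTerm α (L * s ^ α) k := by
  unfold mittagLefflerTerm
  fun_prop (disch := exact fun _ => Or.inr hα)

theorem add_integral_sub_rpow_mul_sum_mittagLefflerTerm (hα : 0 < α) (L M C : ℝ) {τ : ℝ}
    (hτ : 0 ≤ τ) (n : ℕ) :
    M + L / Gamma α * ∫ s in (0:ℝ)..τ, (τ - s) ^ (α - 1) *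
        (M * ∑ k ∈ Finset.range n, mittagLefflerTerm α (L * s ^ α) k +
          C * mittagLefflerTerm α (L * s ^ α) n) =
      M * ∑ k ∈ Finset.range (n + 1), mittagLefflerTerm α (L * τ ^ α) k +
        C * mittagLefflerTerm α (L * τ ^ α) (n + 1) := by
  set F : ℕ → ℝ → ℝ := fun k s => (τ - s) ^ (α - 1) * mittagLefflerTerm α (L * s ^ α) k
  have hF : ∀ k, IntervalIntegrable (F k) volume 0 τ := fun k =>
    intervalIntegrable_sub_rpow_smul hα hτ
      (continuous_mittagLefflerTerm_mul_rpow hα.le L k).continuousOn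
  have hsplit : ∫ s in (0:ℝ)..τ, (τ - s) ^ (α - 1) *
        (M * ∑ k ∈ Finset.range n, mittagLefflerTerm α (L * s ^ α) k +
          C * mittagLefflerTerm α (L * s ^ α) n) =
      M * ∑ k ∈ Finset.range n, (∫ s in (0:ℝ)..τ, F k s) + C * ∫ s in (0:ℝ)..τ, F n s := by
    have hFsum : IntervalIntegrable (fun s => ∑ k ∈ Finset.range n, M * F k s) volume 0 τ := by
      simpa only [Finset.sum_fn] using
        IntervalIntegrable.sum (Finset.range n) fun k _ => (hF k).const_mul M
    calc _ = ∫ s in (0:ℝ)..τ, (∑ k ∈ Finset.range n, M * F k s) + C * F n s :=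
          intervalIntegral.integral_congr fun s _ => by
            simp only [F, mul_add, Finset.mul_sum, mul_left_comm]
      _ = _ := by
          rw [intervalIntegral.integral_add hFsum ((hF n).const_mul C),
            intervalIntegral.integral_finsetSum fun k _ => (hF k).const_mul M]
          simp only [intervalIntegral.integral_const_mul, Finset.mul_sum]
  have hterm₀ : mittagLefflerTerm α (L * τ ^ α) 0 = 1 := by simp [mittagLefflerTerm]
  simp only [Finset.sum_range_succ', hterm₀, ← integral_sub_rpow_mul_mittagLefflerTerm hα L hτ,
    ← Finset.mul_sum, hsplit, F]
  ring

theorem le_sum_mittagLefflerTerm_add_of_le_add_integral {L M C t : ℝ} {φ : ℝ → ℝ} (hα : 0 < α)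
    (hL : 0 ≤ L) (hφ : ContinuousOn φ (Icc 0 t)) (hC : ∀ τ ∈ Icc 0 t, φ τ ≤ C)
    (h : ∀ τ ∈ Icc 0 t, φ τ ≤ M + L / Gamma α * ∫ s in (0:ℝ)..τ, (τ - s) ^ (α - 1) * φ s)
    (n : ℕ) :
    ∀ τ ∈ Icc 0 t, φ τ ≤ M * ∑ k ∈ Finset.range n, mittagLefflerTerm α (L * τ ^ α) k +
      C * mittagLefflerTerm α (L * τ ^ α) n := by
  induction n with
  | zero => simpa [mittagLefflerTerm] using hC
  | succ n ih =>
    intro τ hτ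
    have hsub : Icc 0 τ ⊆ Icc 0 t := Icc_subset_Icc_right hτ.2
    have hbound : Continuous fun s =>
        M * ∑ k ∈ Finset.range n, mittagLefflerTerm α (L * s ^ α) k +
          C * mittagLefflerTerm α (L * s ^ α) n := by
      have := continuous_mittagLefflerTerm_mul_rpow hα.le L
      fun_prop
    calc φ τ ≤ M + L / Gamma α * ∫ s in (0:ℝ)..τ, (τ - s) ^ (α - 1) * φ s := h τ hτ
      _ ≤ M + L / Gamma α * ∫ s in (0:ℝ)..τ, (τ - s) ^ (α - 1) *
            (M * ∑ k ∈ Finset.range n, mittagLefflerTerm α (L * s ^ α) k +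
              C * mittagLefflerTerm α (L * s ^ α) n) := by
          have := Gamma_pos_of_pos hα
          gcongr
          refine intervalIntegral.integral_mono_on hτ.1
            (intervalIntegrable_sub_rpow_smul hα hτ.1 (hφ.mono hsub))
            (intervalIntegrable_sub_rpow_smul hα hτ.1 hbound.continuousOn) fun s hs => ?_
          exact mul_le_mul_of_nonneg_left (ih s (hsub hs)) (rpow_nonneg (sub_nonneg.2 hs.2) _)
      _ = _ := add_integral_sub_rpow_mul_sum_mittagLefflerTerm hα L M C hτ.1 n

theorem le_mul_mittagLeffler_of_le_add_integral {L M t : ℝ} {φ : ℝ → ℝ} (hα : 0 < α)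
    (hL : 0 ≤ L) (ht : 0 ≤ t) (hφ : ContinuousOn φ (Icc 0 t))
    (h : ∀ τ ∈ Icc 0 t, φ τ ≤ M + L / Gamma α * ∫ s in (0:ℝ)..τ, (τ - s) ^ (α - 1) * φ s) :
    φ t ≤ M * mittagLeffler α (L * t ^ α) := by
  obtain ⟨C, hC⟩ := isCompact_Icc.bddAbove_image hφ
  have hsum := summable_mittagLefflerTerm hα (L * t ^ α)
  have hlim : Tendsto (fun n => M * ∑ k ∈ Finset.range n, mittagLefflerTerm α (L * t ^ α) k +
      C * mittagLefflerTerm α (L * t ^ α) n) atTop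
        (𝓝 (M * mittagLeffler α (L * t ^ α) + C * 0)) :=
    (hsum.hasSum.tendsto_sum_nat.const_mul M).add (hsum.tendsto_atTop_zero.const_mul C)
  rw [mul_zero, add_zero] at hlim
  exact ge_of_tendsto' hlim fun n => le_sum_mittagLefflerTerm_add_of_le_add_integral hα hL hφ
    (fun τ hτ => hC (mem_image_of_mem φ hτ)) h n t ⟨ht, le_rfl⟩

theorem norm_sub_le_add_integral_of_volterra {E : Type*} [NormedAddCommGroup E]
    [NormedSpace ℝ E] {L τ : ℝ} {g : E → E} {f h x y : ℝ → E} (hα : 0 < α) (hτ : 0 ≤ τ)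
    (hg : ∀ u v, ‖g u - g v‖ ≤ L * ‖u - v‖)
    (hx : ContinuousOn x (Icc 0 τ)) (hy : ContinuousOn y (Icc 0 τ))
    (hxeq : x τ = f τ + (1 / Gamma α) • ∫ s in (0:ℝ)..τ, (τ - s) ^ (α - 1) • g (x s))
    (hyeq : y τ = h τ + (1 / Gamma α) • ∫ s in (0:ℝ)..τ, (τ - s) ^ (α - 1) • g (y s)) :
    ‖x τ - y τ‖ ≤
      ‖f τ - h τ‖ + L / Gamma α * ∫ s in (0:ℝ)..τ, (τ - s) ^ (α - 1) * ‖x s - y s‖ := by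
  have hgc : Continuous g :=
    (LipschitzWith.of_dist_le' fun u v => by simpa only [dist_eq_norm] using hg u v).continuous
  have hdiff : x τ - y τ = (f τ - h τ) + (1 / Gamma α) •
      ∫ s in (0:ℝ)..τ, (τ - s) ^ (α - 1) • (g (x s) - g (y s)) := by
    have hIx : IntervalIntegrable (fun s => (τ - s) ^ (α - 1) • g (x s)) volume 0 τ :=
      intervalIntegrable_sub_rpow_smul hα hτ (hgc.comp_continuousOn hx)
    have hIy : IntervalIntegrable (fun s => (τ - s) ^ (α - 1) • g (y s)) volume 0 τ :=
      intervalIntegrable_sub_rpow_smul hα hτ (hgc.comp_continuousOn hy)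
    simp only [smul_sub]
    rw [intervalIntegral.integral_sub hIx hIy, hxeq, hyeq, smul_sub]
    abel
  have hint : ‖∫ s in (0:ℝ)..τ, (τ - s) ^ (α - 1) • (g (x s) - g (y s))‖ ≤
      ∫ s in (0:ℝ)..τ, (τ - s) ^ (α - 1) * (L * ‖x s - y s‖) := by
    refine intervalIntegral.norm_integral_le_of_norm_le hτ (ae_of_all _ fun s hs => ?_)
      (intervalIntegrable_sub_rpow_smul hα hτ (continuousOn_const.mul (hx.sub hy).norm))
    have hK : 0 ≤ (τ - s) ^ (α - 1) := rpow_nonneg (sub_nonneg.2 hs.2) _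
    rw [norm_smul, norm_of_nonneg hK]
    exact mul_le_mul_of_nonneg_left (hg _ _) hK
  calc ‖x τ - y τ‖ ≤ ‖f τ - h τ‖ + 1 / Gamma α *
        ‖∫ s in (0:ℝ)..τ, (τ - s) ^ (α - 1) • (g (x s) - g (y s))‖ := by
        rw [hdiff]
        refine (norm_add_le _ _).trans_eq ?_
        rw [norm_smul, norm_of_nonneg (by positivity [Gamma_pos_of_pos hα])]
    _ ≤ ‖f τ - h τ‖ + 1 / Gamma α * ∫ s in (0:ℝ)..τ, (τ - s) ^ (α - 1) * (L * ‖x s - y s‖) := by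
        have := Gamma_pos_of_pos hα
        gcongr
    _ = _ := by
        simp only [mul_left_comm _ L, intervalIntegral.integral_const_mul]
        ring

end

theorem stmt5_general {d : ℕ} (α : ℝ) (hα : α ∈ Set.Ioo (0:ℝ) 1)
    (g : EuclideanSpace ℝ (Fin d) → EuclideanSpace ℝ (Fin d))
    (L : ℝ) (hL : 0 < L)
    (hg : ∀ x y : EuclideanSpace ℝ (Fin d), ‖g x - g y‖ ≤ L * ‖x - y‖)
    (T : ℝ)
    (f h : ℝ → EuclideanSpace ℝ (Fin d))
    (hf : ContinuousOn f (Set.Icc 0 T)) (hh : ContinuousOn h (Set.Icc 0 T))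
    (xf xh : ℝ → EuclideanSpace ℝ (Fin d))
    (hxf : ContinuousOn xf (Set.Icc 0 T))
    (hxh : ContinuousOn xh (Set.Icc 0 T))
    (hxfeq : ∀ t ∈ Set.Icc (0:ℝ) T,
      xf t = f t + (1 / Real.Gamma α) •
        ∫ s in (0:ℝ)..t, ((t - s) ^ (α - 1)) • g (xf s))
    (hxheq : ∀ t ∈ Set.Icc (0:ℝ) T,
      xh t = h t + (1 / Real.Gamma α) •
        ∫ s in (0:ℝ)..t, ((t - s) ^ (α - 1)) • g (xh s)) :
    ∀ t ∈ Set.Icc (0:ℝ) T,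
      ‖xf t - xh t‖ ≤
        (⨆ s : Set.Icc (0:ℝ) t, ‖f s.1 - h s.1‖) * mittagLeffler α (L * t ^ α) := by
  intro t ht
  have hsub : Icc 0 t ⊆ Icc 0 T := Icc_subset_Icc_right ht.2
  have hbdd : BddAbove (range fun s : Icc (0:ℝ) t => ‖f s.1 - h s.1‖) := by
    simpa only [image_eq_range, Pi.sub_apply] using
      isCompact_Icc.bddAbove_image ((hf.mono hsub).sub (hh.mono hsub)).norm
  refine le_mul_mittagLeffler_of_le_add_integral (φ := fun s => ‖xf s - xh s‖) hα.1 hL.le ht.1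
    ((hxf.mono hsub).sub (hxh.mono hsub)).norm fun τ hτ => ?_
  have hsubτ : Icc 0 τ ⊆ Icc 0 T := (Icc_subset_Icc_right hτ.2).trans hsub
  refine (norm_sub_le_add_integral_of_volterra hα.1 hτ.1 hg (hxf.mono hsubτ) (hxh.mono hsubτ)
    (hxfeq τ (hsub hτ)) (hxheq τ (hsub hτ))).trans ?_
  gcongr
  exact le_ciSup hbdd ⟨τ, hτ⟩

theorem stmt5 {d : ℕ} (α : ℝ) (hα : α ∈ Set.Ioo (0:ℝ) 1)
    (g : EuclideanSpace ℝ (Fin d) → EuclideanSpace ℝ (Fin d))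
    (L : ℝ) (hL : 0 < L)
    (hg : ∀ x y : EuclideanSpace ℝ (Fin d), ‖g x - g y‖ ≤ L * ‖x - y‖)
    (T : ℝ) (hT : 0 < T)
    (f h : ℝ → EuclideanSpace ℝ (Fin d))
    (hf : ContinuousOn f (Set.Icc 0 T)) (hh : ContinuousOn h (Set.Icc 0 T))
    (xf xh : ℝ → EuclideanSpace ℝ (Fin d))
    (hxf : ContinuousOn xf (Set.Icc 0 T))
    (hxh : ContinuousOn xh (Set.Icc 0 T))
    (hxfeq : ∀ t ∈ Set.Icc (0:ℝ) T,
      xf t = f t + (1 / Real.Gamma α) •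
        ∫ s in (0:ℝ)..t, ((t - s) ^ (α - 1)) • g (xf s))
    (hxheq : ∀ t ∈ Set.Icc (0:ℝ) T,
      xh t = h t + (1 / Real.Gamma α) •
        ∫ s in (0:ℝ)..t, ((t - s) ^ (α - 1)) • g (xh s)) :
    ∀ t ∈ Set.Icc (0:ℝ) T,
      ‖xf t - xh t‖ ≤
        (⨆ s : Set.Icc (0:ℝ) t, ‖f s.1 - h s.1‖) * mittagLeffler α (L * t ^ α) :=
  stmt5_general α hα g L hL hg T f h hf hh xf xh hxf hxh hxfeq hxheq
end

section
/- Let α ∈ (0,1), let g : ℝ^d → ℝ^d satisfy a global Lipschitz condition with constant L > 0, let T > 0, and let x₀, y₀ ∈ ℝ^d. If x(·, x₀) and x(·, y₀) are the unique continuous solutions on [0,T] of x(t) = x₀ + (1/Γ(α)) ∫₀ᵗ (t−s)^{α−1} g(x(s)) ds and of the same equation with initial value y₀, then ‖x(t, x₀) − x(t, y₀)‖ ≤ ‖x₀ − y₀‖ · E_α(L t^α) for all t ∈ [0,T]. Hence solutions of the autonomous Caputo fractional differential equation of order α depend continuously on the initial condition. -/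
open Real MeasureTheory Set intervalIntegral

-- Gamma ratio lower bound: for x > 1, 0 < a ≤ 1, Γ(x) * (x-1)^a ≤ Γ(x+a)
lemma gamma_ratio {x a : ℝ} (hx : 1 < x) (ha : 0 < a) (ha1 : a ≤ 1) :
    Real.Gamma x * (x - 1) ^ a ≤ Real.Gamma (x + a) := by
  have hx0 : (0:ℝ) < x - 1 := by linarith
  have h1 : (x - 1 : ℝ) ∈ Set.Ioi (0:ℝ) := hx0
  have h2 : (x + a : ℝ) ∈ Set.Ioi (0:ℝ) := by simp; linarith
  have hs := Real.convexOn_log_Gamma.slope_mono_adjacent h1 h2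
    (show x - 1 < x by linarith) (show x < x + a by linarith)
  simp only [Function.comp_apply] at hs
  have hΓx : 0 < Real.Gamma x := Real.Gamma_pos_of_pos (by linarith)
  have hΓxa : 0 < Real.Gamma (x + a) := Real.Gamma_pos_of_pos (by linarith)
  have hΓx1 : 0 < Real.Gamma (x - 1) := Real.Gamma_pos_of_pos hx0
  have hrec : Real.Gamma x = (x - 1) * Real.Gamma (x - 1) := by
    have := Real.Gamma_add_one (show x - 1 ≠ 0 by positivity)
    simpa using this
  have hlog1 : Real.log (Real.Gamma x) - Real.log (Real.Gamma (x - 1)) = Real.log (x - 1) := by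
    rw [hrec, Real.log_mul (by positivity) (by positivity)]; ring
  rw [show x - (x - 1) = 1 by ring, show x + a - x = a by ring, div_one] at hs
  rw [hlog1] at hs
  -- hs : log (x-1) ≤ (log Γ(x+a) - log Γ x) / a
  have h3 : a * Real.log (x - 1) ≤ Real.log (Real.Gamma (x + a)) - Real.log (Real.Gamma x) := by
    rw [le_div_iff₀ ha] at hs; linarith [mul_comm a (Real.log (x-1))]
  have : Real.log (Real.Gamma x * (x - 1) ^ a) ≤ Real.log (Real.Gamma (x + a)) := by
    rw [Real.log_mul (by positivity) (by positivity), Real.log_rpow hx0]; linarith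
  have := Real.exp_le_exp.mpr this
  rwa [Real.exp_log (by positivity), Real.exp_log hΓxa] at this

-- summability of the Mittag-Leffler series terms
lemma ml_summable {a : ℝ} (ha : 0 < a) (ha1 : a ≤ 1) (r : ℝ) :
    Summable (fun k : ℕ => r ^ k / Real.Gamma (a * k + 1)) := by
  apply summable_of_ratio_norm_eventually_le (r := 1/2) (by norm_num)
  have hten : Filter.Tendsto (fun k : ℕ => (a * k) ^ a) Filter.atTop Filter.atTop := by
    apply Filter.Tendsto.comp (tendsto_rpow_atTop ha)
    exact Filter.Tendsto.const_mul_atTop ha tendsto_natCast_atTop_atTop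
  have hev := hten.eventually_ge_atTop (2 * |r|)
  filter_upwards [hev, Filter.eventually_ge_atTop 1] with k hk hk1
  push_cast
  have hak : (0:ℝ) < a * k := by positivity
  have hx : (1:ℝ) < a * k + 1 := by linarith
  have h := gamma_ratio hx ha ha1
  have hΓ1 : 0 < Real.Gamma (a * k + 1) := Real.Gamma_pos_of_pos (by linarith)
  have hΓ2 : 0 < Real.Gamma (a * (k+1) + 1) := Real.Gamma_pos_of_pos (by positivity)
  have heq : a * ((k:ℝ)+1) + 1 = (a * k + 1) + a := by ring
  have hΓ2' : 0 < Real.Gamma ((a * k + 1) + a) := by rw [← heq]; exact hΓ2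
  rw [heq, Real.norm_eq_abs, Real.norm_eq_abs, abs_div, abs_div, abs_of_pos hΓ1,
    abs_of_pos (show (0:ℝ) < Real.Gamma ((a*k+1)+a) by rw [← heq]; exact hΓ2),
    show (1:ℝ)/2 * (|r ^ k| / Real.Gamma (a * k + 1))
      = (1/2 * |r ^ k|) / Real.Gamma (a * k + 1) by ring,
    div_le_div_iff₀ hΓ2' hΓ1]
  have hkey : Real.Gamma (a * k + 1) * (a * k) ^ a ≤ Real.Gamma ((a * k + 1) + a) := by
    simpa using h
  calc |r ^ (k+1)| * Real.Gamma (a * k + 1) = |r| * |r ^ k| * Real.Gamma (a * k + 1) := by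
        rw [pow_succ, abs_mul]; ring
    _ ≤ (1/2) * (a*k)^a * |r ^ k| * Real.Gamma (a * k + 1) := by
        have h5 : |r| ≤ (1/2) * (a*k)^a := by linarith
        nlinarith [abs_nonneg (r ^ k), hΓ1.le, mul_nonneg (abs_nonneg (r^k)) hΓ1.le]
    _ = (1/2) * |r ^ k| * (Real.Gamma (a * k + 1) * (a*k)^a) := by ring
    _ ≤ 1/2 * |r ^ k| * Real.Gamma ((a * k + 1) + a) := by
        apply mul_le_mul_of_nonneg_left hkey (by positivity)

lemma betaReal {a b : ℝ} (ha : 0 < a) (hb : 0 < b) :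
    ∫ s in (0:ℝ)..1, s ^ (a-1) * (1-s) ^ (b-1)
      = Real.Gamma a * Real.Gamma b / Real.Gamma (a+b) := by
  have key := Complex.Gamma_mul_Gamma_eq_betaIntegral
    (s := (a:ℂ)) (t := (b:ℂ)) (by simpa using ha) (by simpa using hb)
  have hB : Complex.betaIntegral a b
      = ((∫ s in (0:ℝ)..1, s ^ (a-1) * (1-s) ^ (b-1) : ℝ) : ℂ) := by
    rw [Complex.betaIntegral, ← intervalIntegral.integral_ofReal]
    apply intervalIntegral.integral_congr_ae
    filter_upwards with s hs
    rw [Set.uIoc_of_le (by norm_num : (0:ℝ) ≤ 1)] at hs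
    obtain ⟨hs0, hs1⟩ := hs
    rw [show ((a:ℂ) - 1) = ((a-1:ℝ):ℂ) by push_cast; ring,
      show ((b:ℂ) - 1) = ((b-1:ℝ):ℂ) by push_cast; ring,
      show ((1:ℂ) - (s:ℝ)) = ((1-s:ℝ):ℂ) by push_cast; ring,
      ← Complex.ofReal_cpow hs0.le, ← Complex.ofReal_cpow (by linarith)]
    push_cast; ring
  have hΓab : Complex.Gamma ((a:ℂ) + b) = ((Real.Gamma (a+b) : ℝ) : ℂ) := by
    rw [← Complex.ofReal_add, Complex.Gamma_ofReal]
  rw [Complex.Gamma_ofReal, Complex.Gamma_ofReal, hΓab, hB] at key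
  have hpos : Real.Gamma (a+b) ≠ 0 := (Real.Gamma_pos_of_pos (by linarith)).ne'
  have : ((Real.Gamma a * Real.Gamma b : ℝ) : ℂ)
      = ((Real.Gamma (a+b) * ∫ s in (0:ℝ)..1, s ^ (a-1) * (1-s) ^ (b-1) : ℝ) : ℂ) := by
    push_cast; exact key
  have := Complex.ofReal_injective this
  field_simp
  linarith [this]

lemma convIntegral {a b t : ℝ} (ha : 0 < a) (hb : 0 < b) (ht : 0 < t) :
    ∫ s in (0:ℝ)..t, (t-s) ^ (a-1) * s ^ (b-1)
      = Real.Gamma a * Real.Gamma b / Real.Gamma (a+b) * t ^ (a+b-1) := by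
  have hsub := intervalIntegral.smul_integral_comp_mul_left
    (a := 0) (b := 1) (fun s => (t-s) ^ (a-1) * s ^ (b-1)) t
  simp only [mul_zero, mul_one, smul_eq_mul] at hsub
  rw [← hsub]
  have hcongr : ∫ u in (0:ℝ)..1, (t - t*u) ^ (a-1) * (t*u) ^ (b-1)
      = ∫ u in (0:ℝ)..1, (t ^ (a-1) * t ^ (b-1)) * ((1-u) ^ (a-1) * u ^ (b-1)) := by
    apply intervalIntegral.integral_congr_ae
    filter_upwards with u hu
    rw [Set.uIoc_of_le (by norm_num : (0:ℝ) ≤ 1)] at hu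
    obtain ⟨hu0, hu1⟩ := hu
    rw [show t - t*u = t * (1-u) by ring,
      Real.mul_rpow ht.le (by linarith), Real.mul_rpow ht.le hu0.le]
    ring
  rw [hcongr, intervalIntegral.integral_const_mul]
  have hbeta : ∫ u in (0:ℝ)..1, (1-u) ^ (a-1) * u ^ (b-1)
      = Real.Gamma b * Real.Gamma a / Real.Gamma (b+a) := by
    rw [← betaReal hb ha]
    apply intervalIntegral.integral_congr
    intro u _; ring
  rw [hbeta]
  rw [show t * (t ^ (a-1) * t ^ (b-1) * (Real.Gamma b * Real.Gamma a / Real.Gamma (b+a)))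
      = (Real.Gamma a * Real.Gamma b / Real.Gamma (a+b)) * (t * (t ^ (a-1) * t ^ (b-1)))
      by rw [add_comm b a]; ring]
  congr 1
  rw [← Real.rpow_add ht]
  nth_rewrite 1 [← Real.rpow_one t]
  rw [← Real.rpow_add ht]
  ring_nf

noncomputable def mlTerm (α L : ℝ) (k : ℕ) (s : ℝ) : ℝ :=
  L ^ k * s ^ (α * k) / Real.Gamma (α * k + 1)

lemma mlTerm_cont {α : ℝ} (hα : 0 ≤ α) (L : ℝ) (k : ℕ) : Continuous (mlTerm α L k) := by
  unfold mlTerm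
  exact (continuous_const.mul (Real.continuous_rpow_const (by positivity))).div_const _

lemma mlTerm_nonneg {α L : ℝ} (hα : 0 < α) (hL : 0 ≤ L) (k : ℕ) {s : ℝ} (hs : 0 ≤ s) :
    0 ≤ mlTerm α L k s := by
  unfold mlTerm
  have := Real.Gamma_pos_of_pos (show (0:ℝ) < α * k + 1 by positivity)
  positivity

lemma mlTerm_zero (α L : ℝ) (s : ℝ) : mlTerm α L 0 s = 1 := by
  simp [mlTerm, Real.Gamma_one]

lemma intervalIntegrable_smul_cont {E : Type*} [NormedAddCommGroup E] [NormedSpace ℝ E]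
    {f : ℝ → ℝ} {g : ℝ → E} {a b : ℝ} (hf : IntervalIntegrable f volume a b)
    (hg : ContinuousOn g (Set.uIcc a b)) :
    IntervalIntegrable (fun s => f s • g s) volume a b := by
  obtain ⟨C, hC⟩ := isCompact_uIcc.exists_bound_of_continuousOn hg
  rw [intervalIntegrable_iff] at hf ⊢
  apply MeasureTheory.Integrable.mono' (hf.norm.const_mul C)
  · exact hf.aestronglyMeasurable.smul
      ((hg.mono Set.uIoc_subset_uIcc).aestronglyMeasurable measurableSet_uIoc)
  · filter_upwards [ae_restrict_mem measurableSet_uIoc] with s hs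
    rw [norm_smul]
    calc ‖f s‖ * ‖g s‖ ≤ ‖f s‖ * C :=
          mul_le_mul_of_nonneg_left (hC s (Set.uIoc_subset_uIcc hs)) (norm_nonneg _)
      _ = C * ‖f s‖ := mul_comm _ _

lemma ker_integrable {α t : ℝ} (hα0 : 0 < α) (hα1 : α < 1) :
    IntervalIntegrable (fun s => (t - s) ^ (α - 1)) volume 0 t := by
  have h0 := intervalIntegrable_rpow' (show (-1:ℝ) < α - 1 by linarith) (a := 0) (b := t)
  have h1 := h0.comp_sub_left t
  simpa using h1.symm

lemma mlTerm_integral {α L t : ℝ} (hα0 : 0 < α) (hα1 : α < 1) (hL : 0 < L) (ht : 0 ≤ t) (k : ℕ) :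
    ∫ s in (0:ℝ)..t, (t-s) ^ (α-1) * mlTerm α L k s
      = (Real.Gamma α / L) * mlTerm α L (k+1) t := by
  rcases ht.eq_or_lt with rfl | ht'
  · rw [intervalIntegral.integral_same, mlTerm,
      Real.zero_rpow (show α * (k+1:ℕ) ≠ 0 by positivity)]
    simp
  · have hb : (0:ℝ) < α * k + 1 := by positivity
    have hΓb : (0:ℝ) < Real.Gamma (α * k + 1) := Real.Gamma_pos_of_pos hb
    have hcongr : ∀ s : ℝ, (t-s) ^ (α-1) * mlTerm α L k s
        = (L ^ k / Real.Gamma (α * k + 1)) * ((t-s) ^ (α-1) * s ^ ((α * k + 1) - 1)) := by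
      intro s; rw [mlTerm, add_sub_cancel_right]; ring
    rw [intervalIntegral.integral_congr (fun s _ => hcongr s),
      intervalIntegral.integral_const_mul, convIntegral hα0 hb ht']
    rw [show α + (α * (k:ℝ) + 1) - 1 = α * ((k:ℕ)+1:ℕ) by push_cast; ring,
      show α + (α * (k:ℝ) + 1) = α * ((k:ℕ)+1:ℕ) + 1 by push_cast; ring, mlTerm]
    field_simp
    ring

theorem stmt6 {d : ℕ} (α : ℝ) (hα : α ∈ Set.Ioo (0:ℝ) 1)
    (g : EuclideanSpace ℝ (Fin d) → EuclideanSpace ℝ (Fin d))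
    (L : ℝ) (hL : 0 < L)
    (hg : ∀ x y : EuclideanSpace ℝ (Fin d), ‖g x - g y‖ ≤ L * ‖x - y‖)
    (T : ℝ) (hT : 0 < T)
    (x₀ y₀ : EuclideanSpace ℝ (Fin d))
    (x y : ℝ → EuclideanSpace ℝ (Fin d))
    (hx : ContinuousOn x (Set.Icc 0 T))
    (hy : ContinuousOn y (Set.Icc 0 T))
    (hxeq : ∀ t ∈ Set.Icc (0:ℝ) T,
      x t = x₀ + (1 / Real.Gamma α) •
        ∫ s in (0:ℝ)..t, ((t - s) ^ (α - 1)) • g (x s))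
    (hyeq : ∀ t ∈ Set.Icc (0:ℝ) T,
      y t = y₀ + (1 / Real.Gamma α) •
        ∫ s in (0:ℝ)..t, ((t - s) ^ (α - 1)) • g (y s)) :
    ∀ t ∈ Set.Icc (0:ℝ) T,
      ‖x t - y t‖ ≤ ‖x₀ - y₀‖ * mittagLeffler α (L * t ^ α) := by
  obtain ⟨hα0, hα1⟩ := hα
  set C := ‖x₀ - y₀‖ with hCdef
  have hC0 : 0 ≤ C := norm_nonneg _
  set φ : ℝ → ℝ := fun s => ‖x s - y s‖ with hφdef
  have hφc : ContinuousOn φ (Set.Icc 0 T) := (hx.sub hy).norm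
  obtain ⟨M, hM⟩ := isCompact_Icc.exists_bound_of_continuousOn hφc
  have hM' : ∀ s ∈ Set.Icc (0:ℝ) T, φ s ≤ M :=
    fun s hs => (le_abs_self _).trans (by simpa [Real.norm_eq_abs] using hM s hs)
  have hM0 : 0 ≤ M :=
    le_trans (norm_nonneg (φ 0)) (hM 0 ⟨le_refl 0, hT.le⟩)
  have hΓα : 0 < Real.Gamma α := Real.Gamma_pos_of_pos hα0
  have hgc : Continuous g := by
    have : LipschitzWith (Real.toNNReal L) g := by
      apply LipschitzWith.of_dist_le_mul
      intro a b
      rw [dist_eq_norm, dist_eq_norm, Real.coe_toNNReal L hL.le]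
      exact hg a b
    exact this.continuous
  -- Step 1: basic integral inequality
  have key : ∀ t ∈ Set.Icc (0:ℝ) T,
      φ t ≤ C + (L / Real.Gamma α) * ∫ s in (0:ℝ)..t, (t-s) ^ (α-1) * φ s := by
    intro t ht
    obtain ⟨ht0, htT⟩ := ht
    have hsub : Set.uIcc (0:ℝ) t ⊆ Set.Icc 0 T := by
      rw [Set.uIcc_of_le ht0]; exact Set.Icc_subset_Icc_right htT
    have hker := ker_integrable (t := t) hα0 hα1
    have hIx : IntervalIntegrable (fun s => (t-s) ^ (α-1) • g (x s)) volume 0 t :=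
      intervalIntegrable_smul_cont hker (hgc.comp_continuousOn (hx.mono hsub))
    have hIy : IntervalIntegrable (fun s => (t-s) ^ (α-1) • g (y s)) volume 0 t :=
      intervalIntegrable_smul_cont hker (hgc.comp_continuousOn (hy.mono hsub))
    have hIxy : IntervalIntegrable (fun s => (t-s) ^ (α-1) • (g (x s) - g (y s))) volume 0 t :=
      intervalIntegrable_smul_cont hker
        ((hgc.comp_continuousOn (hx.mono hsub)).sub (hgc.comp_continuousOn (hy.mono hsub)))
    have hdiff : x t - y t = (x₀ - y₀) + (1 / Real.Gamma α) •
        ∫ s in (0:ℝ)..t, (t-s) ^ (α-1) • (g (x s) - g (y s)) := by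
      have hsplit : (∫ s in (0:ℝ)..t, (t-s) ^ (α-1) • (g (x s) - g (y s)))
          = (∫ s in (0:ℝ)..t, (t-s) ^ (α-1) • g (x s))
            - (∫ s in (0:ℝ)..t, (t-s) ^ (α-1) • g (y s)) := by
        rw [← intervalIntegral.integral_sub hIx hIy]
        apply intervalIntegral.integral_congr
        intro s _; simp [smul_sub]
      rw [hxeq t ⟨ht0, htT⟩, hyeq t ⟨ht0, htT⟩, hsplit, smul_sub]
      abel
    have hnorm1 : φ t ≤ C + (1 / Real.Gamma α) *
        ‖∫ s in (0:ℝ)..t, (t-s) ^ (α-1) • (g (x s) - g (y s))‖ := by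
      show ‖x t - y t‖ ≤ _
      rw [hdiff]
      refine (norm_add_le _ _).trans ?_
      rw [norm_smul, Real.norm_eq_abs, abs_of_nonneg (by positivity)]
    have hInorm : ‖∫ s in (0:ℝ)..t, (t-s) ^ (α-1) • (g (x s) - g (y s))‖
        ≤ ∫ s in (0:ℝ)..t, (t-s) ^ (α-1) * (L * φ s) := by
      refine (intervalIntegral.norm_integral_le_integral_norm ht0).trans ?_
      apply intervalIntegral.integral_mono_on ht0 hIxy.norm
      · exact hker.mul_continuousOn (continuousOn_const.mul (hφc.mono hsub))
      · intro s hs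
        have hst : (0:ℝ) ≤ t - s := by linarith [hs.2]
        rw [norm_smul, Real.norm_eq_abs, abs_of_nonneg (Real.rpow_nonneg hst _)]
        exact mul_le_mul_of_nonneg_left (hg (x s) (y s)) (Real.rpow_nonneg hst _)
    have hconst : (∫ s in (0:ℝ)..t, (t-s) ^ (α-1) * (L * φ s))
        = L * ∫ s in (0:ℝ)..t, (t-s) ^ (α-1) * φ s := by
      rw [← intervalIntegral.integral_const_mul]
      apply intervalIntegral.integral_congr
      intro s _; ring
    rw [hconst] at hInorm
    have h2 := mul_le_mul_of_nonneg_left hInorm (show (0:ℝ) ≤ 1 / Real.Gamma α by positivity)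
    have h3 : (1 / Real.Gamma α) * (L * ∫ s in (0:ℝ)..t, (t-s) ^ (α-1) * φ s)
        = (L / Real.Gamma α) * ∫ s in (0:ℝ)..t, (t-s) ^ (α-1) * φ s := by ring
    linarith
  -- Step 2: induction
  have ind : ∀ n : ℕ, ∀ t ∈ Set.Icc (0:ℝ) T,
      φ t ≤ C * (∑ k ∈ Finset.range n, mlTerm α L k t) + M * mlTerm α L n t := by
    intro n
    induction n with
    | zero => intro t ht; simpa [mlTerm_zero] using hM' t ht
    | succ n ih =>
      intro t ht
      obtain ⟨ht0, htT⟩ := ht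
      have hsub : Set.uIcc (0:ℝ) t ⊆ Set.Icc 0 T := by
        rw [Set.uIcc_of_le ht0]; exact Set.Icc_subset_Icc_right htT
      have hker := ker_integrable (t := t) hα0 hα1
      have hIk : ∀ k : ℕ, IntervalIntegrable (fun s => (t-s) ^ (α-1) * mlTerm α L k s)
          volume 0 t := fun k => hker.mul_continuousOn (mlTerm_cont hα0.le L k).continuousOn
      have hSc : Continuous (fun s => ∑ k ∈ Finset.range n, mlTerm α L k s) :=
        continuous_finset_sum _ (fun k _ => mlTerm_cont hα0.le L k)
      have hIS : IntervalIntegrable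
          (fun s => (t-s) ^ (α-1) * ∑ k ∈ Finset.range n, mlTerm α L k s) volume 0 t :=
        hker.mul_continuousOn hSc.continuousOn
      have hmono : (∫ s in (0:ℝ)..t, (t-s) ^ (α-1) * φ s)
          ≤ ∫ s in (0:ℝ)..t, (t-s) ^ (α-1) *
              (C * (∑ k ∈ Finset.range n, mlTerm α L k s) + M * mlTerm α L n s) := by
        apply intervalIntegral.integral_mono_on ht0
          (hker.mul_continuousOn (hφc.mono hsub))
        · exact hker.mul_continuousOn
            (((continuous_const.mul hSc).add
              (continuous_const.mul (mlTerm_cont hα0.le L n))).continuousOn)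
        · intro s hs
          have hst : (0:ℝ) ≤ t - s := by linarith [hs.2]
          exact mul_le_mul_of_nonneg_left (ih s ⟨hs.1, le_trans hs.2 htT⟩)
            (Real.rpow_nonneg hst _)
      have hsplit : (∫ s in (0:ℝ)..t, (t-s) ^ (α-1) *
              (C * (∑ k ∈ Finset.range n, mlTerm α L k s) + M * mlTerm α L n s))
          = C * (∑ k ∈ Finset.range n, (Real.Gamma α / L) * mlTerm α L (k+1) t)
            + M * ((Real.Gamma α / L) * mlTerm α L (n+1) t) := by
        have e1 : (∫ s in (0:ℝ)..t, (t-s) ^ (α-1) *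
              (C * (∑ k ∈ Finset.range n, mlTerm α L k s) + M * mlTerm α L n s))
            = C * (∫ s in (0:ℝ)..t, (t-s) ^ (α-1) * ∑ k ∈ Finset.range n, mlTerm α L k s)
              + M * (∫ s in (0:ℝ)..t, (t-s) ^ (α-1) * mlTerm α L n s) := by
          rw [← intervalIntegral.integral_const_mul, ← intervalIntegral.integral_const_mul,
            ← intervalIntegral.integral_add (hIS.const_mul C) ((hIk n).const_mul M)]
          apply intervalIntegral.integral_congr
          intro s _; ring
        have e2 : (∫ s in (0:ℝ)..t, (t-s) ^ (α-1) * ∑ k ∈ Finset.range n, mlTerm α L k s)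
            = ∑ k ∈ Finset.range n, ∫ s in (0:ℝ)..t, (t-s) ^ (α-1) * mlTerm α L k s := by
          rw [← intervalIntegral.integral_finset_sum (fun k _ => hIk k)]
          apply intervalIntegral.integral_congr
          intro s _
          simp [Finset.mul_sum]
        rw [e1, e2, mlTerm_integral hα0 hα1 hL ht0 n]
        congr 1
        congr 1
        apply Finset.sum_congr rfl
        intro k _
        rw [mlTerm_integral hα0 hα1 hL ht0 k]
      have hfinal := key t ⟨ht0, htT⟩
      have hLΓ : (L / Real.Gamma α) * (Real.Gamma α / L) = 1 := by
        field_simp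
      have hcomb : (L / Real.Gamma α) *
            (C * (∑ k ∈ Finset.range n, (Real.Gamma α / L) * mlTerm α L (k+1) t)
              + M * ((Real.Gamma α / L) * mlTerm α L (n+1) t))
          = C * (∑ k ∈ Finset.range n, mlTerm α L (k+1) t) + M * mlTerm α L (n+1) t := by
        rw [← Finset.mul_sum]
        field_simp
      have hsum : (∑ k ∈ Finset.range (n+1), mlTerm α L k t)
          = (∑ k ∈ Finset.range n, mlTerm α L (k+1) t) + 1 := by
        rw [Finset.sum_range_succ']
        simp [mlTerm_zero]
      have hmul := mul_le_mul_of_nonneg_left (hmono.trans_eq hsplit)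
        (show (0:ℝ) ≤ L / Real.Gamma α by positivity)
      rw [hcomb] at hmul
      rw [hsum]
      linarith
  -- Step 3: take the limit
  intro t ht
  have ht0 : (0:ℝ) ≤ t := ht.1
  set r := L * t ^ α with hrdef
  have hr0 : 0 ≤ r := by positivity
  have hterm : ∀ k : ℕ, mlTerm α L k t = r ^ k / Real.Gamma (α * k + 1) := by
    intro k
    rw [mlTerm, hrdef, mul_pow, ← Real.rpow_natCast (t ^ α) k, ← Real.rpow_mul ht0]
  have hsummable := ml_summable hα0 hα1.le r
  have htermnn : ∀ k : ℕ, 0 ≤ r ^ k / Real.Gamma (α * k + 1) := by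
    intro k
    have := Real.Gamma_pos_of_pos (show (0:ℝ) < α * k + 1 by positivity)
    positivity
  have hpartial : ∀ n : ℕ, (∑ k ∈ Finset.range n, mlTerm α L k t)
      ≤ mittagLeffler α r := by
    intro n
    rw [mittagLeffler]
    calc (∑ k ∈ Finset.range n, mlTerm α L k t)
        = ∑ k ∈ Finset.range n, r ^ k / Real.Gamma (α * k + 1) :=
          Finset.sum_congr rfl (fun k _ => hterm k)
      _ ≤ ∑' k : ℕ, r ^ k / Real.Gamma (α * k + 1) :=
          Summable.sum_le_tsum (Finset.range n) (fun k _ => htermnn k) hsummable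
  have htail : Filter.Tendsto (fun n : ℕ => M * mlTerm α L n t) Filter.atTop (nhds 0) := by
    have h1 := hsummable.tendsto_atTop_zero
    have h2 : Filter.Tendsto (fun n : ℕ => mlTerm α L n t) Filter.atTop (nhds 0) := by
      apply h1.congr
      intro n; rw [hterm n]
    simpa using h2.const_mul M
  have hbound : ∀ n : ℕ, φ t ≤ C * mittagLeffler α r + M * mlTerm α L n t := by
    intro n
    calc φ t ≤ C * (∑ k ∈ Finset.range n, mlTerm α L k t) + M * mlTerm α L n t := ind n t ht
      _ ≤ C * mittagLeffler α r + M * mlTerm α L n t := by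
          have := mul_le_mul_of_nonneg_left (hpartial n) hC0
          linarith
  have hlim : Filter.Tendsto (fun n : ℕ => C * mittagLeffler α r + M * mlTerm α L n t)
      Filter.atTop (nhds (C * mittagLeffler α r)) := by
    simpa using (tendsto_const_nhds.add htail)
  exact ge_of_tendsto' hlim hbound
end

section
/- Let α ∈ (0,1), let g : ℝ^d → ℝ^d satisfy a global Lipschitz condition with constant L > 0, let τ ≥ 0, and let f, h : ℝ₊ → ℝ^d be continuous, with x_f, x_h the unique continuous global solutions of the singular Volterra integral equations with kernel (1/Γ(α))(t−s)^{α−1} and forcing terms f and h. Define (T_τ f)(θ) = f(τ + θ) + (1/Γ(α)) ∫₀^τ (τ + θ − s)^{α−1} g(x_f(s)) ds for θ ≥ 0, and likewise T_τ h. Then for every n ∈ ℕ and every k ∈ ℕ with k ≥ τ: sup_{θ∈[0,n]} ‖(T_τ f)(θ) − (T_τ h)(θ)‖ ≤ sup_{t∈[0,k+n]} ‖f(t) − h(t)‖ + (L (k+n)^α / (α Γ(α))) · sup_{s∈[0,τ]} ‖x_f(s) − x_h(s)‖. -/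
/-!
The forcing terms differ by `‖f − h‖` at the time `τ + θ ≤ k + n`. The memory terms differ by
`∫₀^τ (τ + θ − s)^(α−1) • (g (x_f s) − g (x_h s)) ds`, whose integrand is bounded by
`(τ + θ − s)^(α−1) · L · sup_{[0,τ]} ‖x_f − x_h‖`, and
`∫₀^τ (τ + θ − s)^(α−1) ds = ((τ + θ)^α − θ^α) / α ≤ (k + n)^α / α`.
-/

open Real MeasureTheory Set

lemma intervalIntegrable_rpow_sub_left {α : ℝ} (hα : 0 < α) (t a b : ℝ) :
    IntervalIntegrable (fun s => (t - s) ^ (α - 1)) volume a b := by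
  simpa using (intervalIntegral.intervalIntegrable_rpow' (r := α - 1) (by linarith)
    (a := t - a) (b := t - b)).comp_sub_left t

lemma integral_rpow_sub_left_le {α τ t : ℝ} (hα : 0 < α) (hτ : τ ≤ t) :
    ∫ s in (0:ℝ)..τ, (t - s) ^ (α - 1) ≤ t ^ α / α := by
  rw [intervalIntegral.integral_comp_sub_left (fun u => u ^ (α - 1)) t,
    integral_rpow (Or.inl (by linarith)), sub_add_cancel, sub_zero]
  gcongr
  exact sub_le_self _ (rpow_nonneg (sub_nonneg.2 hτ) _)

lemma norm_integral_rpow_smul_sub_le {E : Type*} [NormedAddCommGroup E] [NormedSpace ℝ E]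
    {α τ t M : ℝ} (hα : 0 < α) (hτ : 0 ≤ τ) (hτt : τ ≤ t) {u v : ℝ → E}
    (hu : ContinuousOn u (Icc 0 τ)) (hv : ContinuousOn v (Icc 0 τ))
    (huv : ∀ s ∈ Icc 0 τ, ‖u s - v s‖ ≤ M) :
    ‖(∫ s in (0:ℝ)..τ, (t - s) ^ (α - 1) • u s) - ∫ s in (0:ℝ)..τ, (t - s) ^ (α - 1) • v s‖
      ≤ M * (t ^ α / α) := by
  have hM : 0 ≤ M := (norm_nonneg _).trans (huv 0 ⟨le_rfl, hτ⟩)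
  have hK := intervalIntegrable_rpow_sub_left hα t 0 τ
  have hKsmul {w : ℝ → E} (hw : ContinuousOn w (Icc 0 τ)) :
      IntervalIntegrable (fun s => (t - s) ^ (α - 1) • w s) volume 0 τ := by
    rw [intervalIntegrable_iff_integrableOn_Icc_of_le hτ] at hK ⊢
    exact hK.smul_continuousOn hw isCompact_Icc
  rw [← intervalIntegral.integral_sub (hKsmul hu) (hKsmul hv)]
  calc ‖∫ s in (0:ℝ)..τ, (t - s) ^ (α - 1) • u s - (t - s) ^ (α - 1) • v s‖
      ≤ ∫ s in (0:ℝ)..τ, M * (t - s) ^ (α - 1) := by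
        refine intervalIntegral.norm_integral_le_of_norm_le hτ
          (Filter.Eventually.of_forall fun s hs => ?_) (hK.const_mul M)
        have hts : 0 ≤ t - s := by linarith [hs.2]
        rw [← smul_sub, norm_smul, norm_of_nonneg (rpow_nonneg hts _), mul_comm]
        gcongr
        exact huv s (Ioc_subset_Icc_self hs)
    _ ≤ M * (t ^ α / α) := by
        rw [intervalIntegral.integral_const_mul]
        exact mul_le_mul_of_nonneg_left (integral_rpow_sub_left_le hα hτt) hM

lemma le_iSup_Icc_of_continuousOn {F : ℝ → ℝ} {a b t : ℝ} (hF : ContinuousOn F (Icc a b))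
    (ht : t ∈ Icc a b) : F t ≤ ⨆ s : Icc a b, F s := by
  refine le_ciSup (f := fun s : Icc a b => F s) ?_ ⟨t, ht⟩
  simpa [image_eq_range] using isCompact_Icc.bddAbove_image hF

lemma norm_add_smul_sub_add_smul_le {E : Type*} [NormedAddCommGroup E] [NormedSpace ℝ E]
    {c : ℝ} (hc : 0 ≤ c) (a b x y : E) :
    ‖(a + c • x) - (b + c • y)‖ ≤ ‖a - b‖ + c * ‖x - y‖ := by
  calc ‖(a + c • x) - (b + c • y)‖ = ‖(a - b) + c • (x - y)‖ := by
        rw [smul_sub]; congr 1; abel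
    _ ≤ ‖a - b‖ + c * ‖x - y‖ := by
        rw [← norm_smul_of_nonneg hc]
        exact norm_add_le _ _

theorem stmt9_general {d : ℕ} (α : ℝ) (hα : α ∈ Set.Ioo (0:ℝ) 1)
    (g : EuclideanSpace ℝ (Fin d) → EuclideanSpace ℝ (Fin d))
    (L : ℝ) (hL : 0 < L)
    (hg : ∀ x y : EuclideanSpace ℝ (Fin d), ‖g x - g y‖ ≤ L * ‖x - y‖)
    (τ : ℝ) (hτ : 0 ≤ τ)
    (f h : ℝ → EuclideanSpace ℝ (Fin d))
    (hf : ContinuousOn f (Set.Ici 0)) (hh : ContinuousOn h (Set.Ici 0))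
    (xf xh : ℝ → EuclideanSpace ℝ (Fin d))
    (hxf : ContinuousOn xf (Set.Ici 0)) (hxh : ContinuousOn xh (Set.Ici 0)) :
    ∀ (n k : ℕ), τ ≤ (k : ℝ) →
      (⨆ θ : Set.Icc (0:ℝ) (n : ℝ),
        ‖(f (τ + θ.1) + (1 / Real.Gamma α) •
            ∫ s in (0:ℝ)..τ, ((τ + θ.1 - s) ^ (α - 1)) • g (xf s)) -
          (h (τ + θ.1) + (1 / Real.Gamma α) •
            ∫ s in (0:ℝ)..τ, ((τ + θ.1 - s) ^ (α - 1)) • g (xh s))‖) ≤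
      (⨆ t : Set.Icc (0:ℝ) ((k : ℝ) + (n : ℝ)), ‖f t.1 - h t.1‖) +
        (L * ((k : ℝ) + (n : ℝ)) ^ α / (α * Real.Gamma α)) *
          (⨆ s : Set.Icc (0:ℝ) τ, ‖xf s.1 - xh s.1‖) := by
  intro n k hk
  set M := ⨆ s : Set.Icc (0:ℝ) τ, ‖xf s.1 - xh s.1‖
  have hα0 : 0 ≤ α := hα.1.le
  have hgc : Continuous g := (LipschitzWith.of_dist_le_mul (K := L.toNNReal) fun x y => by
    simpa [dist_eq_norm, hL.le] using hg x y).continuous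
  have hgx {x : ℝ → EuclideanSpace ℝ (Fin d)} (hx : ContinuousOn x (Ici 0)) :
      ContinuousOn (fun s => g (x s)) (Icc 0 τ) :=
    hgc.comp_continuousOn (hx.mono Icc_subset_Ici_self)
  have hgM : ∀ s ∈ Icc 0 τ, ‖g (xf s) - g (xh s)‖ ≤ L * M := fun s hs =>
    (hg _ _).trans <| mul_le_mul_of_nonneg_left (le_iSup_Icc_of_continuousOn
      ((hxf.mono Icc_subset_Ici_self).sub (hxh.mono Icc_subset_Ici_self)).norm hs) hL.le
  have hLM : 0 ≤ L * M := (norm_nonneg _).trans (hgM 0 ⟨le_rfl, hτ⟩)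
  have : Nonempty (Icc (0:ℝ) n) := ⟨⟨0, le_rfl, n.cast_nonneg⟩⟩
  refine ciSup_le fun ⟨θ, hθ0, hθn⟩ => ?_
  have htkn : τ + θ ≤ k + n := by linarith
  refine (norm_add_smul_sub_add_smul_le (by positivity) _ _ _ _).trans (add_le_add ?_ ?_)
  · exact le_iSup_Icc_of_continuousOn (F := fun t => ‖f t - h t‖)
      ((hf.mono Icc_subset_Ici_self).sub (hh.mono Icc_subset_Ici_self)).norm
      ⟨by linarith, htkn⟩
  · calc 1 / Gamma α * ‖_‖ ≤ 1 / Gamma α * (L * M * ((τ + θ) ^ α / α)) := by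
          gcongr
          exact norm_integral_rpow_smul_sub_le hα.1 hτ (by linarith) (hgx hxf) (hgx hxh) hgM
      _ ≤ 1 / Gamma α * (L * M * ((k + n) ^ α / α)) := by
          gcongr
      _ = _ := by field_simp

theorem stmt9 {d : ℕ} (α : ℝ) (hα : α ∈ Set.Ioo (0:ℝ) 1)
    (g : EuclideanSpace ℝ (Fin d) → EuclideanSpace ℝ (Fin d))
    (L : ℝ) (hL : 0 < L)
    (hg : ∀ x y : EuclideanSpace ℝ (Fin d), ‖g x - g y‖ ≤ L * ‖x - y‖)
    (τ : ℝ) (hτ : 0 ≤ τ)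
    (f h : ℝ → EuclideanSpace ℝ (Fin d))
    (hf : ContinuousOn f (Set.Ici 0)) (hh : ContinuousOn h (Set.Ici 0))
    (xf xh : ℝ → EuclideanSpace ℝ (Fin d))
    (hxf : ContinuousOn xf (Set.Ici 0)) (hxh : ContinuousOn xh (Set.Ici 0))
    (hxfeq : ∀ t : ℝ, 0 ≤ t →
      xf t = f t + (1 / Real.Gamma α) •
        ∫ s in (0:ℝ)..t, ((t - s) ^ (α - 1)) • g (xf s))
    (hxheq : ∀ t : ℝ, 0 ≤ t →
      xh t = h t + (1 / Real.Gamma α) •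
        ∫ s in (0:ℝ)..t, ((t - s) ^ (α - 1)) • g (xh s)) :
    ∀ (n k : ℕ), τ ≤ (k : ℝ) →
      (⨆ θ : Set.Icc (0:ℝ) (n : ℝ),
        ‖(f (τ + θ.1) + (1 / Real.Gamma α) •
            ∫ s in (0:ℝ)..τ, ((τ + θ.1 - s) ^ (α - 1)) • g (xf s)) -
          (h (τ + θ.1) + (1 / Real.Gamma α) •
            ∫ s in (0:ℝ)..τ, ((τ + θ.1 - s) ^ (α - 1)) • g (xh s))‖) ≤
      (⨆ t : Set.Icc (0:ℝ) ((k : ℝ) + (n : ℝ)), ‖f t.1 - h t.1‖) +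
        (L * ((k : ℝ) + (n : ℝ)) ^ α / (α * Real.Gamma α)) *
          (⨆ s : Set.Icc (0:ℝ) τ, ‖xf s.1 - xh s.1‖) :=
  stmt9_general α hα g L hL hg τ hτ f h hf hh xf xh hxf hxh
end

section
/- Let α ∈ (0,1), β > 0, let g : ℝ^d → ℝ^d satisfy a global Lipschitz condition with constant L > 0, let T > 0, and let x₀ ∈ ℝ^d. Then there exists a unique continuous function x : [0,T] → ℝ^d satisfying the integral equation with substantial time derivative kernel: x(t) = x₀ + (1/Γ(α)) ∫₀ᵗ (t−s)^{α−1} e^{−β(t−s)} g(x(s)) ds for all t ∈ [0,T]. -/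
/-! The Picard operator `x ↦ x₀ + I(g ∘ x)` is a contraction for the Bielecki distance
`sup_t e^{-γt} ‖x t - y t‖` on `[0, T]` once `γ ^ α = 2L`: pulling the weight `e^{γs}` through the
tempered fractional integral `I` leaves `∫₀^∞ u^{α-1} e^{-(β+γ)u} du / Γ(α) ≤ γ^{-α}`, so the
Lipschitz constant drops to `L / γ ^ α = 1/2`. Banach's fixed point theorem on `C([0, T], ℝ^d)`,
after the substitution `x t = e^{γt} u t`, gives existence and uniqueness. -/

open Real MeasureTheory Set intervalIntegral

noncomputable def temperedKernel (α β u : ℝ) : ℝ := u ^ (α - 1) * exp (-β * u)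

lemma temperedKernel_nonneg (α β : ℝ) {u : ℝ} (hu : 0 ≤ u) : 0 ≤ temperedKernel α β u :=
  mul_nonneg (rpow_nonneg hu _) (exp_pos _).le

lemma temperedKernel_mul_exp (α β γ u : ℝ) :
    temperedKernel α β u * exp (-γ * u) = temperedKernel α (β + γ) u := by
  rw [temperedKernel, temperedKernel, mul_assoc, ← exp_add]
  ring_nf

section Kernel

variable {α β : ℝ}

lemma integrableOn_temperedKernel_Ioi (hα : 0 < α) (hβ : 0 < β) :
    IntegrableOn (temperedKernel α β) (Ioi 0) := by
  unfold temperedKernel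
  simpa only [rpow_one] using
    integrableOn_rpow_mul_exp_neg_mul_rpow (s := α - 1) (p := 1) (by linarith) one_pos hβ

lemma intervalIntegrable_temperedKernel (hα : 0 < α) (hβ : 0 < β) {a b : ℝ}
    (ha : 0 ≤ a) (hb : 0 ≤ b) : IntervalIntegrable (temperedKernel α β) volume a b := by
  refine IntegrableOn.intervalIntegrable ?_
  refine ((integrableOn_Ici_iff_integrableOn_Ioi).mpr
    (integrableOn_temperedKernel_Ioi hα hβ)).mono_set fun u hu => ?_
  exact (le_min ha hb).trans hu.1

lemma integral_temperedKernel_le (hα : 0 < α) (hβ : 0 < β) {t : ℝ} (ht : 0 ≤ t) :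
    ∫ u in (0:ℝ)..t, temperedKernel α β u ≤ Gamma α / β ^ α := calc
  ∫ u in (0:ℝ)..t, temperedKernel α β u ≤ ∫ u in Ioi 0, temperedKernel α β u := by
    rw [integral_of_le ht]
    refine setIntegral_mono_set (integrableOn_temperedKernel_Ioi hα hβ) ?_
      Ioc_subset_Ioi_self.eventuallyLE
    filter_upwards [ae_restrict_mem measurableSet_Ioi] with u hu
    exact temperedKernel_nonneg α β (le_of_lt hu)
  _ = Gamma α / β ^ α := by
    simp only [temperedKernel, neg_mul]
    rw [integral_rpow_mul_exp_neg_mul_Ioi hα hβ, one_div, inv_rpow hβ.le, inv_mul_eq_div]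

end Kernel

section TemperedIntegral

variable {E : Type*} [NormedAddCommGroup E] [NormedSpace ℝ E] {α β : ℝ}

/-- `∫₀ᵗ ã(t,s) f(s) ds` with the kernel `ã` of the paper. -/
noncomputable def temperedIntegral (α β : ℝ) (f : ℝ → E) (t : ℝ) : E :=
  (1 / Gamma α) • ∫ s in (0:ℝ)..t, temperedKernel α β (t - s) • f s

lemma integral_comp_sub_smul_symm (k : ℝ → ℝ) (f : ℝ → E) (t : ℝ) :
    ∫ s in (0:ℝ)..t, k (t - s) • f s = ∫ u in (0:ℝ)..t, k u • f (t - u) := by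
  simpa using integral_comp_sub_left (fun u => k u • f (t - u)) t (a := 0) (b := t)

lemma intervalIntegrable_temperedKernel_sub_smul (hα : 0 < α) (hβ : 0 < β) {f : ℝ → E}
    {t : ℝ} (ht : 0 ≤ t) (hf : ContinuousOn f (Icc 0 t)) :
    IntervalIntegrable (fun s => temperedKernel α β (t - s) • f s) volume 0 t := by
  have hk := (intervalIntegrable_temperedKernel hα hβ ht le_rfl).comp_sub_left t
  rw [sub_self, sub_zero] at hk
  exact hk.smul_continuousOn (by rwa [uIcc_of_le ht])

lemma temperedIntegral_sub (hα : 0 < α) (hβ : 0 < β) {f g : ℝ → E} {t : ℝ} (ht : 0 ≤ t)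
    (hf : ContinuousOn f (Icc 0 t)) (hg : ContinuousOn g (Icc 0 t)) :
    temperedIntegral α β f t - temperedIntegral α β g t = temperedIntegral α β (f - g) t := by
  rw [temperedIntegral, temperedIntegral, temperedIntegral, ← smul_sub,
    ← integral_sub (intervalIntegrable_temperedKernel_sub_smul hα hβ ht hf)
      (intervalIntegrable_temperedKernel_sub_smul hα hβ ht hg)]
  simp only [Pi.sub_apply, smul_sub]

lemma norm_temperedIntegral_le_of_norm_le_exp (hα : 0 < α) (hβ : 0 ≤ β) {γ : ℝ} (hγ : 0 < γ)
    {f : ℝ → E} {A t : ℝ} (ht : 0 ≤ t) (hf : ∀ s ∈ Icc 0 t, ‖f s‖ ≤ A * exp (γ * s)) :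
    ‖temperedIntegral α β f t‖ ≤ A * exp (γ * t) / γ ^ α := by
  have hA : 0 ≤ A := by simpa using (norm_nonneg _).trans (hf 0 ⟨le_rfl, ht⟩)
  have hβγ : 0 < β + γ := by linarith
  have hpointwise : ∀ u ∈ Ioc 0 t,
      ‖temperedKernel α β u • f (t - u)‖ ≤ A * exp (γ * t) * temperedKernel α (β + γ) u := by
    intro u hu
    have hfu := hf (t - u) ⟨by linarith [hu.2], by linarith [hu.1]⟩
    rw [norm_smul, norm_of_nonneg (temperedKernel_nonneg α β hu.1.le), ← temperedKernel_mul_exp]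
    calc temperedKernel α β u * ‖f (t - u)‖
        ≤ temperedKernel α β u * (A * exp (γ * (t - u))) :=
          mul_le_mul_of_nonneg_left hfu (temperedKernel_nonneg α β hu.1.le)
      _ = A * exp (γ * t) * (temperedKernel α β u * exp (-γ * u)) := by
          rw [mul_sub, sub_eq_add_neg, exp_add, neg_mul_eq_neg_mul]; ring
  calc ‖temperedIntegral α β f t‖
      = (1 / Gamma α) * ‖∫ u in (0:ℝ)..t, temperedKernel α β u • f (t - u)‖ := by
        rw [temperedIntegral, integral_comp_sub_smul_symm, norm_smul,
          norm_of_nonneg (by positivity)]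
    _ ≤ (1 / Gamma α) * (A * exp (γ * t) * ∫ u in (0:ℝ)..t, temperedKernel α (β + γ) u) := by
        rw [← intervalIntegral.integral_const_mul]
        refine mul_le_mul_of_nonneg_left (norm_integral_le_of_norm_le ht ?_ ?_) (by positivity)
        · filter_upwards with u hu using hpointwise u hu
        · exact (intervalIntegrable_temperedKernel hα hβγ le_rfl ht).const_mul _
    _ ≤ (1 / Gamma α) * (A * exp (γ * t) * (Gamma α / (β + γ) ^ α)) := by
        gcongr
        exact integral_temperedKernel_le hα hβγ ht
    _ = A * exp (γ * t) / (β + γ) ^ α := by field_simp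
    _ ≤ A * exp (γ * t) / γ ^ α := by
        gcongr
        linarith

lemma continuousOn_temperedIntegral (hα : 0 < α) (hβ : 0 < β) {f : ℝ → E} (hf : Continuous f)
    (T : ℝ) : ContinuousOn (temperedIntegral α β f) (Icc 0 T) := by
  obtain ⟨C, hC⟩ := isCompact_Icc.exists_bound_of_continuousOn (hf.continuousOn (s := Icc (-T) T))
  let F : ℝ → ℝ → E := fun t => {u | u ≤ t}.indicator fun u => temperedKernel α β u • f (t - u)
  have hF : EqOn (temperedIntegral α β f) (fun t => (1 / Gamma α) • ∫ u in (0:ℝ)..T, F t u)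
      (Icc 0 T) := fun t ht => by
    simp only [F, temperedIntegral, integral_comp_sub_smul_symm, integral_indicator ht]
  -- Over the fixed interval `[0, T]` the integrand jumps in `t` only where `u = t`, a null set,
  -- so dominated convergence applies.
  refine (ContinuousOn.const_smul (fun t₀ ht₀ => ?_) _).congr hF
  have hk : Measurable (temperedKernel α β) := by unfold temperedKernel; fun_prop
  refine continuousWithinAt_of_dominated_interval (bound := fun u => C * temperedKernel α β u)
    ?_ ?_ ((intervalIntegrable_temperedKernel hα hβ le_rfl (ht₀.1.trans ht₀.2)).const_mul C) ?_
  · filter_upwards with t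
    exact (hk.aestronglyMeasurable.smul
      (hf.comp (continuous_sub_left t)).aestronglyMeasurable).indicator measurableSet_Iic
  · filter_upwards [self_mem_nhdsWithin] with t ht
    filter_upwards with u hu
    rw [uIoc_of_le (ht₀.1.trans ht₀.2)] at hu
    refine (norm_indicator_le_norm_self _ _).trans ?_
    rw [norm_smul, norm_of_nonneg (temperedKernel_nonneg α β hu.1.le), mul_comm]
    exact mul_le_mul_of_nonneg_right (hC _ ⟨by linarith [ht.1, hu.2], by linarith [ht.2, hu.1]⟩)
      (temperedKernel_nonneg α β hu.1.le)
  · filter_upwards [Measure.ae_ne volume t₀] with u hu _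
    refine ContinuousAt.continuousWithinAt ?_
    rcases hu.lt_or_gt with hlt | hgt
    · refine ((continuous_const (y := temperedKernel α β u)).smul
        (hf.comp (continuous_sub_right u))).continuousAt.congr ?_
      filter_upwards [Ioi_mem_nhds hlt] with t ht
      exact (indicator_of_mem (le_of_lt ht) _).symm
    · refine (continuousAt_const (y := (0 : E))).congr ?_
      filter_upwards [Iio_mem_nhds hgt] with t ht
      exact (indicator_of_notMem (s := {u | u ≤ t}) (not_le.mpr ht : ¬u ≤ t) _).symm

lemma norm_temperedIntegral_comp_sub_comp_le {F : Type*} [NormedAddCommGroup F]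
    [NormedSpace ℝ F] (hα : 0 < α) (hβ : 0 < β) {γ : ℝ} (hγ : 0 < γ) {K : NNReal} {g : F → E}
    (hg : LipschitzWith K g) {x y : ℝ → F} {t δ : ℝ} (ht : 0 ≤ t) (hx : ContinuousOn x (Icc 0 t))
    (hy : ContinuousOn y (Icc 0 t)) (hxy : ∀ s ∈ Icc 0 t, ‖x s - y s‖ ≤ δ * exp (γ * s)) :
    ‖temperedIntegral α β (g ∘ x) t - temperedIntegral α β (g ∘ y) t‖ ≤
      K / γ ^ α * δ * exp (γ * t) := by
  rw [temperedIntegral_sub hα hβ ht (hg.continuous.comp_continuousOn hx)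
    (hg.continuous.comp_continuousOn hy)]
  calc _ ≤ K * δ * exp (γ * t) / γ ^ α := by
        refine norm_temperedIntegral_le_of_norm_le_exp hα hβ.le hγ ht fun s hs => ?_
        rw [mul_assoc]
        exact (hg.norm_sub_le _ _).trans (mul_le_mul_of_nonneg_left (hxy s hs) K.2)
    _ = K / γ ^ α * δ * exp (γ * t) := by ring

end TemperedIntegral

section Bielecki

variable {E : Type*} [NormedAddCommGroup E] [NormedSpace ℝ E] {T γ : ℝ}

/-- `u` stands for `s ↦ exp (γ s) • u s`, so the sup distance on `C(Icc 0 T, E)` becomes the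
Bielecki distance. -/
noncomputable def ofWeighted (hT : 0 ≤ T) (γ : ℝ) (u : C(Icc 0 T, E)) (s : ℝ) : E :=
  exp (γ * s) • IccExtend hT u s

noncomputable def toWeighted (γ : ℝ) {x : ℝ → E} (hx : ContinuousOn x (Icc 0 T)) :
    C(Icc 0 T, E) :=
  ⟨fun s => exp (-(γ * s)) • x s, by
    have hexp : Continuous fun s : Icc 0 T => exp (-(γ * s)) := by fun_prop
    exact hexp.smul hx.domRestrict⟩

lemma toWeighted_apply (γ : ℝ) {x : ℝ → E} (hx : ContinuousOn x (Icc 0 T)) (s : Icc 0 T) :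
    toWeighted γ hx s = exp (-(γ * s)) • x s := rfl

lemma continuous_ofWeighted (hT : 0 ≤ T) (γ : ℝ) (u : C(Icc 0 T, E)) :
    Continuous (ofWeighted hT γ u) :=
  (continuous_exp.comp (continuous_const_mul γ)).smul u.continuous.Icc_extend'

lemma ofWeighted_of_mem (hT : 0 ≤ T) (γ : ℝ) (u : C(Icc 0 T, E)) {s : ℝ} (hs : s ∈ Icc 0 T) :
    ofWeighted hT γ u s = exp (γ * s) • u ⟨s, hs⟩ := by
  rw [ofWeighted, IccExtend_of_mem hT _ hs]

lemma ofWeighted_toWeighted (hT : 0 ≤ T) (γ : ℝ) {x : ℝ → E} (hx : ContinuousOn x (Icc 0 T))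
    {s : ℝ} (hs : s ∈ Icc 0 T) : ofWeighted hT γ (toWeighted γ hx) s = x s := by
  rw [ofWeighted_of_mem hT γ _ hs, toWeighted_apply, smul_smul, ← exp_add, add_neg_cancel,
    exp_zero, one_smul]

lemma norm_ofWeighted_sub_le (hT : 0 ≤ T) (γ : ℝ) (u v : C(Icc 0 T, E)) {s : ℝ}
    (hs : s ∈ Icc 0 T) : ‖ofWeighted hT γ u s - ofWeighted hT γ v s‖ ≤ dist u v * exp (γ * s) := by
  rw [ofWeighted_of_mem hT γ u hs, ofWeighted_of_mem hT γ v hs, ← smul_sub, norm_smul,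
    norm_of_nonneg (exp_pos _).le, mul_comm, ← dist_eq_norm]
  exact mul_le_mul_of_nonneg_right (ContinuousMap.dist_apply_le_dist _) (exp_pos _).le

noncomputable def bieleckiMap (hT : 0 ≤ T) (γ : ℝ) (Φ : (ℝ → E) → ℝ → E)
    (hΦ : ∀ x, Continuous x → ContinuousOn (Φ x) (Icc 0 T)) (u : C(Icc 0 T, E)) :
    C(Icc 0 T, E) :=
  toWeighted γ (hΦ _ (continuous_ofWeighted hT γ u))

lemma contractingWith_bieleckiMap (hT : 0 ≤ T) {q : ℝ} (hq : q < 1) {Φ : (ℝ → E) → ℝ → E}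
    (hΦ : ∀ x, Continuous x → ContinuousOn (Φ x) (Icc 0 T))
    (hΦlip : ∀ x y, ContinuousOn x (Icc 0 T) → ContinuousOn y (Icc 0 T) → ∀ t ∈ Icc 0 T, ∀ δ,
      (∀ s ∈ Icc 0 t, ‖x s - y s‖ ≤ δ * exp (γ * s)) → ‖Φ x t - Φ y t‖ ≤ q * δ * exp (γ * t)) :
    ContractingWith q.toNNReal (bieleckiMap hT γ Φ hΦ) := by
  refine ⟨Real.toNNReal_lt_one.mpr hq, LipschitzWith.of_dist_le_mul fun u v => ?_⟩
  refine (ContinuousMap.dist_le (by positivity)).mpr fun t => ?_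
  have hxy := hΦlip _ _ (continuous_ofWeighted hT γ u).continuousOn
    (continuous_ofWeighted hT γ v).continuousOn t t.2 (dist u v)
    fun s hs => norm_ofWeighted_sub_le hT γ u v ⟨hs.1, hs.2.trans t.2.2⟩
  rw [bieleckiMap, bieleckiMap, dist_eq_norm, toWeighted_apply, toWeighted_apply, ← smul_sub,
    norm_smul, norm_of_nonneg (exp_pos _).le]
  calc exp (-(γ * t)) * ‖Φ (ofWeighted hT γ u) t - Φ (ofWeighted hT γ v) t‖
      ≤ exp (-(γ * t)) * (q * dist u v * exp (γ * t)) :=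
        mul_le_mul_of_nonneg_left hxy (exp_pos _).le
    _ = q * dist u v := by rw [mul_comm, mul_assoc, ← exp_add, add_neg_cancel, exp_zero, mul_one]
    _ ≤ q.toNNReal * dist u v := mul_le_mul_of_nonneg_right (Real.le_coe_toNNReal q) dist_nonneg

theorem exists_unique_fixedPoint_Icc_of_bielecki [CompleteSpace E] (hT : 0 ≤ T) {q : ℝ}
    (hq : q < 1) {Φ : (ℝ → E) → ℝ → E} (hΦ : ∀ x, Continuous x → ContinuousOn (Φ x) (Icc 0 T))
    (hΦlip : ∀ x y, ContinuousOn x (Icc 0 T) → ContinuousOn y (Icc 0 T) → ∀ t ∈ Icc 0 T, ∀ δ,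
      (∀ s ∈ Icc 0 t, ‖x s - y s‖ ≤ δ * exp (γ * s)) → ‖Φ x t - Φ y t‖ ≤ q * δ * exp (γ * t)) :
    ∃ x : ℝ → E, ContinuousOn x (Icc 0 T) ∧ (∀ t ∈ Icc 0 T, Φ x t = x t) ∧
      ∀ y : ℝ → E, ContinuousOn y (Icc 0 T) → (∀ t ∈ Icc 0 T, Φ y t = y t) →
        ∀ t ∈ Icc 0 T, y t = x t := by
  have hQ := contractingWith_bieleckiMap hT hq hΦ hΦlip
  set u := ContractingWith.fixedPoint _ hQ
  have hcausal : ∀ x y, ContinuousOn x (Icc 0 T) → ContinuousOn y (Icc 0 T) → ∀ t ∈ Icc 0 T,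
      EqOn x y (Icc 0 t) → Φ x t = Φ y t := fun x y hx hy t ht hxy => by
    have h := hΦlip x y hx hy t ht 0 fun s hs => by simp [hxy hs]
    rwa [mul_zero, zero_mul, norm_le_zero_iff, sub_eq_zero] at h
  refine ⟨ofWeighted hT γ u, (continuous_ofWeighted hT γ u).continuousOn, fun t ht => ?_,
    fun y hy hyΦ t ht => ?_⟩
  · rw [← ofWeighted_toWeighted hT γ (hΦ _ (continuous_ofWeighted hT γ u)) ht]
    exact congrArg (ofWeighted hT γ · t) hQ.fixedPoint_isFixedPt
  · have hfix : bieleckiMap hT γ Φ hΦ (toWeighted γ hy) = toWeighted γ hy := by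
      ext s
      rw [bieleckiMap, toWeighted_apply, toWeighted_apply, ← hyΦ s s.2]
      congr 1
      refine hcausal _ _ (continuous_ofWeighted hT γ _).continuousOn hy s s.2 fun r hr => ?_
      exact ofWeighted_toWeighted hT γ hy ⟨hr.1, hr.2.trans s.2.2⟩
    rw [← ofWeighted_toWeighted hT γ hy ht, hQ.fixedPoint_unique hfix]

end Bielecki

theorem stmt14 {d : ℕ} (α β : ℝ) (hα : α ∈ Set.Ioo (0:ℝ) 1) (hβ : 0 < β)
    (g : EuclideanSpace ℝ (Fin d) → EuclideanSpace ℝ (Fin d))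
    (L : ℝ) (hL : 0 < L)
    (hg : ∀ x y : EuclideanSpace ℝ (Fin d), ‖g x - g y‖ ≤ L * ‖x - y‖)
    (T : ℝ) (hT : 0 < T)
    (x₀ : EuclideanSpace ℝ (Fin d)) :
    ∃ x : ℝ → EuclideanSpace ℝ (Fin d),
      (ContinuousOn x (Set.Icc 0 T) ∧
        ∀ t ∈ Set.Icc (0:ℝ) T,
          x t = x₀ + (1 / Real.Gamma α) •
            ∫ s in (0:ℝ)..t,
              (((t - s) ^ (α - 1)) * Real.exp (-β * (t - s))) • g (x s)) ∧
      ∀ y : ℝ → EuclideanSpace ℝ (Fin d),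
        ContinuousOn y (Set.Icc 0 T) →
        (∀ t ∈ Set.Icc (0:ℝ) T,
          y t = x₀ + (1 / Real.Gamma α) •
            ∫ s in (0:ℝ)..t,
              (((t - s) ^ (α - 1)) * Real.exp (-β * (t - s))) • g (y s)) →
        ∀ t ∈ Set.Icc (0:ℝ) T, y t = x t := by
  have hgL : LipschitzWith L.toNNReal g := LipschitzWith.of_dist_le_mul fun x y => by
    simpa [dist_eq_norm, hL.le] using hg x y
  obtain ⟨γ, hγ, hγα⟩ : ∃ γ : ℝ, 0 < γ ∧ γ ^ α = 2 * L :=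
    ⟨(2 * L) ^ α⁻¹, by positivity, rpow_inv_rpow (by positivity) hα.1.ne'⟩
  obtain ⟨x, hxc, hxΦ, hxuniq⟩ := exists_unique_fixedPoint_Icc_of_bielecki hT.le
    (by norm_num : (1 / 2 : ℝ) < 1) (γ := γ) (Φ := fun x t => x₀ + temperedIntegral α β (g ∘ x) t)
    (fun x hx => continuousOn_const.add
      (continuousOn_temperedIntegral hα.1 hβ (hgL.continuous.comp hx) T))
    fun x y hx hy t ht δ hxy => by
      rw [add_sub_add_left_eq_sub]
      calc _ ≤ L.toNNReal / γ ^ α * δ * exp (γ * t) :=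
            norm_temperedIntegral_comp_sub_comp_le hα.1 hβ hγ hgL ht.1
              (hx.mono (Icc_subset_Icc_right ht.2)) (hy.mono (Icc_subset_Icc_right ht.2)) hxy
        _ = 1 / 2 * δ * exp (γ * t) := by
            rw [hγα, Real.coe_toNNReal _ hL.le]
            field_simp
  exact ⟨x, ⟨hxc, fun t ht => (hxΦ t ht).symm⟩,
    fun y hy hyx => hxuniq y hy fun t ht => (hyx t ht).symm⟩
end

section
/- Let α ∈ (0,1), let g : ℝ^d → ℝ^d satisfy a global Lipschitz condition with constant L > 0, let τ ≥ 0, and let f, h : ℝ₊ → ℝ^d be continuous with x_f, x_h the unique continuous global solutions of the corresponding singular Volterra integral equations. Then for every k ∈ ℕ with k ≥ τ, the metric ρ on 𝔠 satisfies ρ(T_τ f, T_τ h) ≤ 2^k ρ(f, h) + (L c / (α Γ(α))) · sup_{s∈[0,τ]} ‖x_f(s) − x_h(s)‖, where c = Σ_{n=1}^∞ (k+n)^α / 2^n and (T_τ f)(θ) = f(τ + θ) + (1/Γ(α)) ∫₀^τ (τ + θ − s)^{α−1} g(x_f(s)) ds. -/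
open Real MeasureTheory Set

/-- `sup_{t∈[0,n]} ‖f(t) − h(t)‖`. -/
noncomputable def supDist {d : ℕ} (n : ℝ)
    (f h : ℝ → EuclideanSpace ℝ (Fin d)) : ℝ :=
  ⨆ t : Set.Icc (0:ℝ) n, ‖f t.1 - h t.1‖

/-- `ρ_n(f,h) = sup_{t∈[0,n]}‖f(t)−h(t)‖ / (1 + sup_{t∈[0,n]}‖f(t)−h(t)‖)`. -/
noncomputable def rhoN {d : ℕ} (n : ℝ)
    (f h : ℝ → EuclideanSpace ℝ (Fin d)) : ℝ :=
  supDist n f h / (1 + supDist n f h)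

/-- The metric `ρ(f,h) = ∑_{n=1}^∞ 2^{−n} ρ_n(f,h)` of uniform convergence on
compact subsets of `ℝ₊`. -/
noncomputable def rhoMetric {d : ℕ}
    (f h : ℝ → EuclideanSpace ℝ (Fin d)) : ℝ :=
  ∑' n : ℕ, (1 / 2 ^ (n + 1)) * rhoN ((n : ℝ) + 1) f h

/-- The operator `(T_τ f)(θ) = f(τ+θ) + (1/Γ(α)) ∫₀^τ (τ+θ−s)^{α−1} g(x_f(s)) ds`,
with `x_f` the solution for the forcing term `f`. -/
noncomputable def semigroupOp {d : ℕ} (α : ℝ)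
    (g : EuclideanSpace ℝ (Fin d) → EuclideanSpace ℝ (Fin d))
    (xf : ℝ → EuclideanSpace ℝ (Fin d))
    (τ : ℝ) (f : ℝ → EuclideanSpace ℝ (Fin d)) :
    ℝ → EuclideanSpace ℝ (Fin d) :=
  fun θ => f (τ + θ) + (1 / Real.Gamma α) •
    ∫ s in (0:ℝ)..τ, ((τ + θ - s) ^ (α - 1)) • g (xf s)

/-! ### Auxiliary lemmas -/

lemma bddAbove_normSub {d : ℕ} {f h : ℝ → EuclideanSpace ℝ (Fin d)} {c : ℝ}
    (hf : ContinuousOn f (Set.Icc 0 c)) (hh : ContinuousOn h (Set.Icc 0 c)) :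
    BddAbove (Set.range fun t : Set.Icc (0:ℝ) c => ‖f t.1 - h t.1‖) := by
  have hc : ContinuousOn (fun t => ‖f t - h t‖) (Set.Icc (0:ℝ) c) := (hf.sub hh).norm
  have hb := (isCompact_Icc.image_of_continuousOn hc).bddAbove
  rwa [Set.image_eq_range] at hb

lemma supDist_nonneg {d : ℕ} (f h : ℝ → EuclideanSpace ℝ (Fin d)) {c : ℝ} (hc : 0 ≤ c) :
    0 ≤ supDist c f h := by
  by_cases hb : BddAbove (Set.range fun t : Set.Icc (0:ℝ) c => ‖f t.1 - h t.1‖)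
  · exact (norm_nonneg (f 0 - h 0)).trans (le_ciSup hb ⟨0, le_refl 0, hc⟩)
  · unfold supDist; rw [Real.iSup_of_not_bddAbove hb]

lemma rhoN_nonneg {d : ℕ} (f h : ℝ → EuclideanSpace ℝ (Fin d)) {c : ℝ} (hc : 0 ≤ c) :
    0 ≤ rhoN c f h :=
  div_nonneg (supDist_nonneg f h hc) (by linarith [supDist_nonneg f h hc])

lemma rhoN_le_one {d : ℕ} (f h : ℝ → EuclideanSpace ℝ (Fin d)) {c : ℝ} (hc : 0 ≤ c) :
    rhoN c f h ≤ 1 := by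
  have h0 := supDist_nonneg f h hc
  rw [rhoN, div_le_one (by linarith)]; linarith

lemma frac_le {x a b : ℝ} (hx : 0 ≤ x) (ha : 0 ≤ a) (hb : 0 ≤ b) (hxab : x ≤ a + b) :
    x / (1 + x) ≤ a / (1 + a) + b := by
  have h1 : x / (1 + x) ≤ (a + b) / (1 + (a + b)) := by
    rw [div_le_div_iff₀ (by linarith) (by linarith)]; nlinarith
  have e1 : a / (1 + (a + b)) ≤ a / (1 + a) := by gcongr; linarith
  have e2 : b / (1 + (a + b)) ≤ b := div_le_self hb (by linarith)
  have e3 : (a + b) / (1 + (a + b)) = a / (1 + (a + b)) + b / (1 + (a + b)) :=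
    add_div a b _
  linarith

lemma summable_c (α : ℝ) (hα1 : α ≤ 1) (k : ℕ) :
    Summable (fun n : ℕ => ((k:ℝ) + ((n:ℝ) + 1)) ^ α / 2 ^ (n + 1)) := by
  have h1 : Summable (fun n : ℕ => ((n:ℝ) * (1/2:ℝ) ^ n)) := by
    simpa using summable_pow_mul_geometric_of_norm_lt_one (R := ℝ) 1 (r := (1/2)) (by norm_num)
  have h2 : Summable (fun n : ℕ => ((k:ℝ) + 1) * (1/2:ℝ) ^ n) :=
    (summable_geometric_of_lt_one (by norm_num) (by norm_num)).mul_left _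
  have h3 : Summable (fun n : ℕ => (1/2:ℝ) * ((n:ℝ) * (1/2) ^ n + ((k:ℝ) + 1) * (1/2) ^ n)) :=
    (h1.add h2).mul_left _
  refine Summable.of_nonneg_of_le (fun n => by positivity) (fun n => ?_) h3
  have hbase : (1:ℝ) ≤ (k:ℝ) + ((n:ℝ) + 1) := by
    have h4 := Nat.cast_nonneg (α := ℝ) k; have h5 := Nat.cast_nonneg (α := ℝ) n; linarith
  have hle : ((k:ℝ) + ((n:ℝ) + 1)) ^ α ≤ (k:ℝ) + ((n:ℝ) + 1) := by
    calc ((k:ℝ) + ((n:ℝ) + 1)) ^ α ≤ ((k:ℝ) + ((n:ℝ) + 1)) ^ (1:ℝ) :=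
          Real.rpow_le_rpow_of_exponent_le hbase hα1
      _ = (k:ℝ) + ((n:ℝ) + 1) := Real.rpow_one _
  calc ((k:ℝ) + ((n:ℝ) + 1)) ^ α / 2 ^ (n + 1) ≤ ((k:ℝ) + ((n:ℝ) + 1)) / 2 ^ (n + 1) := by
        gcongr
    _ = (1/2:ℝ) * ((n:ℝ) * (1/2) ^ n + ((k:ℝ) + 1) * (1/2) ^ n) := by
        rw [one_div, inv_pow]; field_simp; ring

lemma summable_geom_mul (b : ℕ → ℝ) (hb0 : ∀ n, 0 ≤ b n) (hb1 : ∀ n, b n ≤ 1) :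
    Summable (fun n : ℕ => (1 / 2 ^ (n + 1) : ℝ) * b n) := by
  refine Summable.of_nonneg_of_le (fun n => mul_nonneg (by positivity) (hb0 n)) (fun n => ?_)
    ((summable_geometric_of_lt_one (by norm_num) (by norm_num : (1/2:ℝ) < 1)).mul_left (1/2:ℝ))
  have he : (1:ℝ) / 2 ^ (n + 1) = (1/2) * (1/2:ℝ) ^ n := by
    rw [one_div_pow (2:ℝ) n, pow_succ]; ring
  calc (1 / 2 ^ (n + 1) : ℝ) * b n ≤ (1 / 2 ^ (n + 1) : ℝ) * 1 := by
        have h6 : (0:ℝ) ≤ 1 / 2 ^ (n+1) := by positivity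
        exact mul_le_mul_of_nonneg_left (hb1 n) h6
    _ = (1/2) * (1/2:ℝ) ^ n := by rw [mul_one, he]

lemma lipschitz_cont {d : ℕ} {g : EuclideanSpace ℝ (Fin d) → EuclideanSpace ℝ (Fin d)}
    {L : ℝ} (hL : 0 < L) (hg : ∀ x y, ‖g x - g y‖ ≤ L * ‖x - y‖) : Continuous g := by
  have h : LipschitzWith (Real.toNNReal L) g := by
    apply LipschitzWith.of_dist_le_mul
    intro x y
    rw [dist_eq_norm, dist_eq_norm, Real.coe_toNNReal L hL.le]
    exact hg x y
  exact h.continuous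

lemma integral_bound {d : ℕ} {α : ℝ} (hα : α ∈ Set.Ioo (0:ℝ) 1)
    {g : EuclideanSpace ℝ (Fin d) → EuclideanSpace ℝ (Fin d)}
    {L : ℝ} (hL : 0 < L) (hg : ∀ x y, ‖g x - g y‖ ≤ L * ‖x - y‖)
    {τ : ℝ} (hτ : 0 ≤ τ) {xf xh : ℝ → EuclideanSpace ℝ (Fin d)}
    (hxf : ContinuousOn xf (Set.Icc 0 τ)) (hxh : ContinuousOn xh (Set.Icc 0 τ))
    {M : ℝ} (hM : ∀ s ∈ Set.Icc (0:ℝ) τ, ‖xf s - xh s‖ ≤ M)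
    {θ : ℝ} (hθ : 0 ≤ θ) :
    ‖(∫ s in (0:ℝ)..τ, ((τ + θ - s) ^ (α - 1)) • g (xf s)) -
      (∫ s in (0:ℝ)..τ, ((τ + θ - s) ^ (α - 1)) • g (xh s))‖ ≤
      L * M * ((τ + θ) ^ α / α) := by
  obtain ⟨hα0, hα1⟩ := hα
  set c := τ + θ with hc
  have hM0 : 0 ≤ M := (norm_nonneg _).trans (hM 0 ⟨le_refl 0, hτ⟩)
  have hK : IntervalIntegrable (fun s => (c - s) ^ (α - 1)) volume 0 τ := by
    have base : IntervalIntegrable (fun u : ℝ => u ^ (α - 1)) volume θ c :=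
      intervalIntegral.intervalIntegrable_rpow' (by linarith)
    have h2 := base.comp_sub_left c
    rw [show c - c = 0 by ring, show c - θ = τ by rw [hc]; ring] at h2
    exact h2.symm
  have hKnn : ∀ s ∈ Set.Icc (0:ℝ) τ, 0 ≤ (c - s) ^ (α - 1) := fun s hs =>
    Real.rpow_nonneg (by simp only [hc]; linarith [hs.2]) _
  have hgc : Continuous g := lipschitz_cont hL hg
  have hIf : IntervalIntegrable (fun s => (c - s) ^ (α - 1) • g (xf s)) volume 0 τ := by
    rw [intervalIntegrable_iff_integrableOn_Icc_of_le hτ] at hK ⊢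
    exact hK.smul_continuousOn (hgc.comp_continuousOn hxf) isCompact_Icc
  have hIh : IntervalIntegrable (fun s => (c - s) ^ (α - 1) • g (xh s)) volume 0 τ := by
    rw [intervalIntegrable_iff_integrableOn_Icc_of_le hτ] at hK ⊢
    exact hK.smul_continuousOn (hgc.comp_continuousOn hxh) isCompact_Icc
  have hdiff : (∫ s in (0:ℝ)..τ, (c - s) ^ (α - 1) • g (xf s)) -
      (∫ s in (0:ℝ)..τ, (c - s) ^ (α - 1) • g (xh s)) =
      ∫ s in (0:ℝ)..τ, (c - s) ^ (α - 1) • (g (xf s) - g (xh s)) := by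
    rw [← intervalIntegral.integral_sub hIf hIh]
    congr 1; funext s; rw [smul_sub]
  rw [hdiff]
  have hIfh : IntervalIntegrable (fun s => (c - s) ^ (α - 1) • (g (xf s) - g (xh s)))
      volume 0 τ := by
    have h3 := hIf.sub hIh
    simpa only [smul_sub] using h3
  have step1 : ‖∫ s in (0:ℝ)..τ, (c - s) ^ (α - 1) • (g (xf s) - g (xh s))‖ ≤
      ∫ s in (0:ℝ)..τ, (c - s) ^ (α - 1) * (L * M) := by
    refine (intervalIntegral.norm_integral_le_integral_norm hτ).trans ?_
    apply intervalIntegral.integral_mono_on hτ (hIfh.norm) (hK.mul_const _)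
    intro s hs
    rw [norm_smul, Real.norm_eq_abs, abs_of_nonneg (hKnn s hs)]
    have h1 : ‖g (xf s) - g (xh s)‖ ≤ L * M :=
      (hg _ _).trans (mul_le_mul_of_nonneg_left (hM s hs) hL.le)
    exact mul_le_mul_of_nonneg_left h1 (hKnn s hs)
  refine step1.trans ?_
  rw [intervalIntegral.integral_mul_const]
  have hval : (∫ s in (0:ℝ)..τ, (c - s) ^ (α - 1)) = (c ^ α - θ ^ α) / α := by
    rw [intervalIntegral.integral_comp_sub_left (fun u : ℝ => u ^ (α - 1)) c]
    rw [show c - τ = θ by rw [hc]; ring, show c - (0:ℝ) = c by ring]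
    rw [integral_rpow (Or.inl (by linarith))]
    rw [sub_add_cancel]
  rw [hval]
  have hθα : 0 ≤ θ ^ α := Real.rpow_nonneg hθ _
  have hcα : 0 ≤ c ^ α := Real.rpow_nonneg (by linarith) _
  have hmono : (c ^ α - θ ^ α) / α ≤ c ^ α / α := by gcongr; linarith
  calc (c ^ α - θ ^ α) / α * (L * M) ≤ c ^ α / α * (L * M) :=
        mul_le_mul_of_nonneg_right hmono (by positivity)
    _ = L * M * (c ^ α / α) := by ring

theorem stmt17 {d : ℕ} (α : ℝ) (hα : α ∈ Set.Ioo (0:ℝ) 1)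
    (g : EuclideanSpace ℝ (Fin d) → EuclideanSpace ℝ (Fin d))
    (L : ℝ) (hL : 0 < L)
    (hg : ∀ x y : EuclideanSpace ℝ (Fin d), ‖g x - g y‖ ≤ L * ‖x - y‖)
    (τ : ℝ) (hτ : 0 ≤ τ)
    (f h : ℝ → EuclideanSpace ℝ (Fin d))
    (hf : ContinuousOn f (Set.Ici 0)) (hh : ContinuousOn h (Set.Ici 0))
    (xf xh : ℝ → EuclideanSpace ℝ (Fin d))
    (hxf : ContinuousOn xf (Set.Ici 0)) (hxh : ContinuousOn xh (Set.Ici 0))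
    (hxfeq : ∀ t : ℝ, 0 ≤ t →
      xf t = f t + (1 / Real.Gamma α) •
        ∫ s in (0:ℝ)..t, ((t - s) ^ (α - 1)) • g (xf s))
    (hxheq : ∀ t : ℝ, 0 ≤ t →
      xh t = h t + (1 / Real.Gamma α) •
        ∫ s in (0:ℝ)..t, ((t - s) ^ (α - 1)) • g (xh s)) :
    ∀ k : ℕ, τ ≤ (k : ℝ) →
      rhoMetric (semigroupOp α g xf τ f) (semigroupOp α g xh τ h) ≤
        2 ^ k * rhoMetric f h +
          (L * (∑' n : ℕ, ((k : ℝ) + ((n : ℝ) + 1)) ^ α / 2 ^ (n + 1)) /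
              (α * Real.Gamma α)) *
            (⨆ s : Set.Icc (0:ℝ) τ, ‖xf s.1 - xh s.1‖) := by
  intro k hk
  obtain ⟨hα0, hα1⟩ := hα
  set Tf := semigroupOp α g xf τ f with hTfdef
  set Th := semigroupOp α g xh τ h with hThdef
  have hΓ : 0 < Real.Gamma α := Real.Gamma_pos_of_pos hα0
  have hMbdd : BddAbove (Set.range fun s : Set.Icc (0:ℝ) τ => ‖xf s.1 - xh s.1‖) :=
    bddAbove_normSub (hxf.mono Set.Icc_subset_Ici_self) (hxh.mono Set.Icc_subset_Ici_self)
  set M := ⨆ s : Set.Icc (0:ℝ) τ, ‖xf s.1 - xh s.1‖ with hMdef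
  have hMle : ∀ s ∈ Set.Icc (0:ℝ) τ, ‖xf s - xh s‖ ≤ M := fun s hs => le_ciSup hMbdd ⟨s, hs⟩
  have hM0 : 0 ≤ M := (norm_nonneg _).trans (hMle 0 ⟨le_refl 0, hτ⟩)
  have hBnn : ∀ n : ℕ, 0 ≤ L * M / (α * Real.Gamma α) * ((k:ℝ) + ((n:ℝ) + 1)) ^ α := by
    intro n
    exact mul_nonneg (div_nonneg (mul_nonneg hL.le hM0) (by positivity))
      (Real.rpow_nonneg (by positivity) _)
  -- the key supremum bound
  have key : ∀ n : ℕ, supDist ((n:ℝ) + 1) Tf Th ≤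
      supDist ((k:ℝ) + ((n:ℝ) + 1)) f h +
        L * M / (α * Real.Gamma α) * ((k:ℝ) + ((n:ℝ) + 1)) ^ α := by
    intro n
    have hn1 : (0:ℝ) ≤ (n:ℝ) + 1 := by positivity
    have hbddA : BddAbove
        (Set.range fun t : Set.Icc (0:ℝ) ((k:ℝ) + ((n:ℝ) + 1)) => ‖f t.1 - h t.1‖) :=
      bddAbove_normSub (hf.mono Set.Icc_subset_Ici_self) (hh.mono Set.Icc_subset_Ici_self)
    haveI : Nonempty (Set.Icc (0:ℝ) ((n:ℝ) + 1)) := ⟨⟨0, le_refl 0, hn1⟩⟩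
    simp only [supDist]
    refine ciSup_le ?_
    rintro ⟨θ, hθ0, hθ1⟩
    have hint := integral_bound ⟨hα0, hα1⟩ hL hg hτ
      (hxf.mono Set.Icc_subset_Ici_self) (hxh.mono Set.Icc_subset_Ici_self) hMle hθ0
    have expand : Tf θ - Th θ = (f (τ + θ) - h (τ + θ)) + (1 / Real.Gamma α) •
        ((∫ s in (0:ℝ)..τ, ((τ + θ - s) ^ (α - 1)) • g (xf s)) -
          (∫ s in (0:ℝ)..τ, ((τ + θ - s) ^ (α - 1)) • g (xh s))) := by
      simp only [hTfdef, hThdef, semigroupOp, smul_sub]; abel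
    have t1 : ‖f (τ + θ) - h (τ + θ)‖ ≤ ⨆ t : Set.Icc (0:ℝ) ((k:ℝ) + ((n:ℝ) + 1)), ‖f t.1 - h t.1‖ := by
      have hmem : τ + θ ∈ Set.Icc (0:ℝ) ((k:ℝ) + ((n:ℝ) + 1)) := ⟨by linarith, by linarith⟩
      exact le_ciSup hbddA ⟨τ + θ, hmem⟩
    have t2 : ‖(1 / Real.Gamma α) •
        ((∫ s in (0:ℝ)..τ, ((τ + θ - s) ^ (α - 1)) • g (xf s)) -
          (∫ s in (0:ℝ)..τ, ((τ + θ - s) ^ (α - 1)) • g (xh s)))‖ ≤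
        L * M / (α * Real.Gamma α) * ((k:ℝ) + ((n:ℝ) + 1)) ^ α := by
      rw [norm_smul, Real.norm_eq_abs, abs_of_nonneg (by positivity : (0:ℝ) ≤ 1 / Real.Gamma α)]
      have h2 : (τ + θ) ^ α ≤ ((k:ℝ) + ((n:ℝ) + 1)) ^ α :=
        Real.rpow_le_rpow (by linarith) (by linarith) hα0.le
      calc (1 / Real.Gamma α) * ‖_‖ ≤ (1 / Real.Gamma α) * (L * M * ((τ + θ) ^ α / α)) :=
            mul_le_mul_of_nonneg_left hint (by positivity)
        _ ≤ (1 / Real.Gamma α) * (L * M * (((k:ℝ) + ((n:ℝ) + 1)) ^ α / α)) := by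
            have hLM : 0 ≤ L * M := mul_nonneg hL.le hM0
            have hd : (τ + θ) ^ α / α ≤ ((k:ℝ) + ((n:ℝ) + 1)) ^ α / α := by gcongr
            exact mul_le_mul_of_nonneg_left (mul_le_mul_of_nonneg_left hd hLM)
              (by positivity)
        _ = L * M / (α * Real.Gamma α) * ((k:ℝ) + ((n:ℝ) + 1)) ^ α := by
            rw [one_div, div_eq_mul_inv, div_eq_mul_inv, mul_inv]; ring
    calc ‖Tf θ - Th θ‖ ≤ ‖f (τ + θ) - h (τ + θ)‖ + ‖(1 / Real.Gamma α) •
          ((∫ s in (0:ℝ)..τ, ((τ + θ - s) ^ (α - 1)) • g (xf s)) -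
            (∫ s in (0:ℝ)..τ, ((τ + θ - s) ^ (α - 1)) • g (xh s)))‖ := by
          rw [expand]; exact norm_add_le _ _
      _ ≤ _ := add_le_add t1 t2
  -- pass to rhoN
  have keyρ : ∀ n : ℕ, rhoN ((n:ℝ) + 1) Tf Th ≤
      rhoN ((k:ℝ) + ((n:ℝ) + 1)) f h +
        L * M / (α * Real.Gamma α) * ((k:ℝ) + ((n:ℝ) + 1)) ^ α := by
    intro n
    simp only [rhoN]
    exact frac_le (supDist_nonneg Tf Th (by positivity))
      (supDist_nonneg f h (by positivity)) (hBnn n) (key n)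
  -- summability
  have SA : Summable (fun n : ℕ => (1 / 2 ^ (n + 1) : ℝ) * rhoN ((n:ℝ) + 1) Tf Th) :=
    summable_geom_mul _ (fun n => rhoN_nonneg Tf Th (by positivity))
      (fun n => rhoN_le_one Tf Th (by positivity))
  have SB : Summable (fun n : ℕ => (1 / 2 ^ (n + 1) : ℝ) * rhoN ((k:ℝ) + ((n:ℝ) + 1)) f h) :=
    summable_geom_mul _ (fun n => rhoN_nonneg f h (by positivity))
      (fun n => rhoN_le_one f h (by positivity))
  have SD : Summable (fun n : ℕ => (1 / 2 ^ (n + 1) : ℝ) * rhoN ((n:ℝ) + 1) f h) :=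
    summable_geom_mul _ (fun n => rhoN_nonneg f h (by positivity))
      (fun n => rhoN_le_one f h (by positivity))
  have SC : Summable (fun n : ℕ => (1 / 2 ^ (n + 1) : ℝ) *
      (L * M / (α * Real.Gamma α) * ((k:ℝ) + ((n:ℝ) + 1)) ^ α)) := by
    have h4 := (summable_c α hα1.le k).mul_left (L * M / (α * Real.Gamma α))
    exact h4.congr (fun n => by ring)
  -- main chain
  have hρT : rhoMetric Tf Th ≤
      (∑' n : ℕ, (1 / 2 ^ (n + 1) : ℝ) * rhoN ((k:ℝ) + ((n:ℝ) + 1)) f h) +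
      (∑' n : ℕ, (1 / 2 ^ (n + 1) : ℝ) *
        (L * M / (α * Real.Gamma α) * ((k:ℝ) + ((n:ℝ) + 1)) ^ α)) := by
    rw [← Summable.tsum_add SB SC]
    simp only [rhoMetric]
    refine Summable.tsum_le_tsum (fun n => ?_) SA (SB.add SC)
    rw [← mul_add]
    exact mul_le_mul_of_nonneg_left (keyρ n) (by positivity)
  have hB : (∑' n : ℕ, (1 / 2 ^ (n + 1) : ℝ) * rhoN ((k:ℝ) + ((n:ℝ) + 1)) f h) ≤
      2 ^ k * rhoMetric f h := by
    simp only [rhoMetric]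
    rw [← tsum_mul_left]
    refine Summable.tsum_le_tsum_of_inj (fun n => k + n) (fun a b hab => by simpa using hab)
      (fun m _ => mul_nonneg (by positivity)
        (mul_nonneg (by positivity) (rhoN_nonneg f h (by positivity))))
      (fun n => ?_) SB (SD.mul_left _)
    have hc : ((k + n : ℕ) : ℝ) + 1 = (k:ℝ) + ((n:ℝ) + 1) := by push_cast; ring
    show (1 / 2 ^ (n + 1) : ℝ) * rhoN ((k:ℝ) + ((n:ℝ) + 1)) f h ≤
      (2:ℝ) ^ k * ((1 / 2 ^ (k + n + 1)) * rhoN (((k + n : ℕ) : ℝ) + 1) f h)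
    rw [hc]
    apply le_of_eq
    have h2 : (2:ℝ) ^ (k + n + 1) = 2 ^ k * 2 ^ (n + 1) := by
      rw [show k + n + 1 = k + (n + 1) from rfl, pow_add]
    rw [← mul_assoc]
    congr 1
    rw [h2]
    field_simp
  have hC : (∑' n : ℕ, (1 / 2 ^ (n + 1) : ℝ) *
      (L * M / (α * Real.Gamma α) * ((k:ℝ) + ((n:ℝ) + 1)) ^ α)) =
      (L * (∑' n : ℕ, ((k : ℝ) + ((n : ℝ) + 1)) ^ α / 2 ^ (n + 1)) /
        (α * Real.Gamma α)) * M := by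
    have h5 : ∀ n : ℕ, (1 / 2 ^ (n + 1) : ℝ) *
        (L * M / (α * Real.Gamma α) * ((k:ℝ) + ((n:ℝ) + 1)) ^ α) =
        (L * M / (α * Real.Gamma α)) * (((k:ℝ) + ((n:ℝ) + 1)) ^ α / 2 ^ (n + 1)) :=
      fun n => by ring
    rw [tsum_congr h5, tsum_mul_left]
    ring
  linarith [hρT, hB, hC.le, hC.ge]
end
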